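/- arXiv:2209.08994 — 7 statements merged into one kernel-verified Lean document; each statement's English description precedes it below -/
import Mathlib

section
/- Let 0 ≤ t < τ < 1, and define ū_t(s) := (ln(2−t) − ln(2−s) − 1)/2 and ū_τ(s) := (ln(2−τ) − ln(2−s) − 1)/2 for s ∈ [τ,1]. Then ∫_τ^1 ((ln(2−s) − ln(2−τ) + 1)·ū_t(s) + ū_t(s)²) ds − ∫_τ^1 ((ln(2−s) − ln(2−τ) + 1)·ū_τ(s) + ū_τ(s)²) ds = (1−τ)·(ln(2−t) − ln(2−τ))²/4 > 0. Hence the leader's optimal control for initial time t, restricted to [τ,1], is strictly suboptimal for initial time τ: the leader's problem is time-inconsistent. -/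
open MeasureTheory intervalIntegral

/-- Stackelberg game example (Section 5.3): time-inconsistency of the leader's
problem.  For `0 ≤ t < τ < 1`, the cost (at initial time `τ`) of
`ū_t(s) = (log(2-t) - log(2-s) - 1)/2` exceeds that of
`ū_τ(s) = (log(2-τ) - log(2-s) - 1)/2` by exactly
`(1-τ) (log(2-t) - log(2-τ))^2 / 4 > 0`. -/
theorem statement6 (t τ : ℝ) (h0 : 0 ≤ t) (h1 : t < τ) (h2 : τ < 1) :
    ((∫ s in τ..(1:ℝ), ((Real.log (2 - s) - Real.log (2 - τ) + 1) *
          ((Real.log (2 - t) - Real.log (2 - s) - 1) / 2)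
        + ((Real.log (2 - t) - Real.log (2 - s) - 1) / 2) ^ 2)) -
      ∫ s in τ..(1:ℝ), ((Real.log (2 - s) - Real.log (2 - τ) + 1) *
          ((Real.log (2 - τ) - Real.log (2 - s) - 1) / 2)
        + ((Real.log (2 - τ) - Real.log (2 - s) - 1) / 2) ^ 2))
      = (1 - τ) * (Real.log (2 - t) - Real.log (2 - τ)) ^ 2 / 4 ∧
    0 < (1 - τ) * (Real.log (2 - t) - Real.log (2 - τ)) ^ 2 / 4 := by
  have hcont : ContinuousOn (fun s : ℝ => Real.log (2 - s)) (Set.uIcc τ 1) := by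
    apply ContinuousOn.log
    · fun_prop
    · intro x hx
      rw [Set.uIcc_of_le h2.le] at hx
      have : x ≤ 1 := hx.2
      linarith
  have hc : ∀ (a : ℝ), ContinuousOn (fun s : ℝ =>
      (Real.log (2 - s) - Real.log (2 - τ) + 1) * ((a - Real.log (2 - s) - 1) / 2)
        + ((a - Real.log (2 - s) - 1) / 2) ^ 2) (Set.uIcc τ 1) := by
    intro a
    exact ((hcont.sub continuousOn_const).add continuousOn_const).mul
        (((continuousOn_const.sub hcont).sub continuousOn_const).div_const 2) |>.add
        ((((continuousOn_const.sub hcont).sub continuousOn_const).div_const 2).pow 2)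
  have hi1 := (hc (Real.log (2 - t))).intervalIntegrable (μ := volume)
  have hi2 := (hc (Real.log (2 - τ))).intervalIntegrable (μ := volume)
  have hlog : Real.log (2 - τ) < Real.log (2 - t) :=
    Real.log_lt_log (by linarith) (by linarith)
  constructor
  · rw [← intervalIntegral.integral_sub hi1 hi2]
    have : ∀ s ∈ Set.uIcc τ (1:ℝ),
        (((Real.log (2 - s) - Real.log (2 - τ) + 1) *
            ((Real.log (2 - t) - Real.log (2 - s) - 1) / 2)
          + ((Real.log (2 - t) - Real.log (2 - s) - 1) / 2) ^ 2)
        - ((Real.log (2 - s) - Real.log (2 - τ) + 1) *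
            ((Real.log (2 - τ) - Real.log (2 - s) - 1) / 2)
          + ((Real.log (2 - τ) - Real.log (2 - s) - 1) / 2) ^ 2))
        = (Real.log (2 - t) - Real.log (2 - τ)) ^ 2 / 4 := by
      intro s _; ring
    rw [intervalIntegral.integral_congr this, intervalIntegral.integral_const]
    simp [smul_eq_mul]; ring
  · have h1τ : 0 < 1 - τ := by linarith
    have : 0 < (Real.log (2 - t) - Real.log (2 - τ)) ^ 2 :=
      pow_pos (by linarith) 2
    positivity
end

section
/- Let γ, α, λ, θ₁, θ₂ be real numbers with γ ≠ 1, α ∉ {0,1}, α/(1−γ) > 0, 0 ≤ λ ≤ 1 and 0 < θ₁ ≤ θ₂. Set β := (1−γ−α)/(1−γ), S := λθ₁ + (1−λ)θ₂ and D := λθ₁^β + (1−λ)θ₂^β (real powers of positive numbers). Then θ₁^β · S^{α/(α−1)} / D^{α/(α−1)} ≥ θ₁ · S^{1/(α−1)} / D^{1/(α−1)}. -/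
/-! With `p = α/(1-γ) > 0` we have `β = 1 - p`, so `θ₁^β θ₂ ≥ θ₁ θ₂^β` is `θ₂^p ≥ θ₁^p`;
averaging with weights `λ, 1-λ` gives `θ₁ D ≤ θ₁^β S`. Since `α/(α-1) = 1/(α-1) + 1`, the claim
is `θ₁ x^r ≤ θ₁^β x^(r+1)` for `x = S/D`, which is this bound multiplied by `x^r`. -/

open Real

theorem mul_rpow_one_sub_le_rpow_one_sub_mul {a b p : ℝ} (ha : 0 < a) (hab : a ≤ b)
    (hp : 0 ≤ p) : a * b ^ (1 - p) ≤ a ^ (1 - p) * b := by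
  have hb : 0 < b := ha.trans_le hab
  rw [rpow_sub ha, rpow_sub hb, rpow_one, rpow_one, mul_div_assoc', div_mul_eq_mul_div]
  exact div_le_div_of_nonneg_left (by positivity) (rpow_pos_of_pos ha p)
    (rpow_le_rpow ha.le hab hp)

theorem mul_convexComb_rpow_one_sub_le {a b p t : ℝ} (ha : 0 < a) (hab : a ≤ b) (hp : 0 ≤ p)
    (ht : t ≤ 1) :
    a * (t * a ^ (1 - p) + (1 - t) * b ^ (1 - p)) ≤ a ^ (1 - p) * (t * a + (1 - t) * b) := by
  have key := mul_le_mul_of_nonneg_left (mul_rpow_one_sub_le_rpow_one_sub_mul ha hab hp)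
    (sub_nonneg.2 ht)
  linear_combination key

theorem mul_rpow_le_mul_rpow_add_one {x c d : ℝ} (hx : 0 < x) (h : d ≤ c * x) (r : ℝ) :
    d * x ^ r ≤ c * x ^ (r + 1) := by
  rw [rpow_add_one hx.ne', ← mul_assoc, mul_right_comm]
  exact mul_le_mul_of_nonneg_right h (rpow_nonneg hx.le r)

theorem div_sub_one_eq_one_div_sub_one_add_one {α : ℝ} (hα : α ≠ 1) :
    α / (α - 1) = 1 / (α - 1) + 1 := by
  field_simp [sub_ne_zero.2 hα]
  ring

theorem convexComb_pos {x y t : ℝ} (hx : 0 < x) (hy : 0 < y) (ht0 : 0 ≤ t) (ht1 : t ≤ 1) :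
    0 < t * x + (1 - t) * y :=
  convex_Ioi (0 : ℝ) hx hy ht0 (sub_nonneg.2 ht1) (add_sub_cancel t 1)

theorem statement7_general (γ α lam θ₁ θ₂ : ℝ) (hγ : γ ≠ 1) (hα1 : α ≠ 1)
    (hpos : 0 < α / (1 - γ)) (hl0 : 0 ≤ lam) (hl1 : lam ≤ 1)
    (h1 : 0 < θ₁) (h12 : θ₁ ≤ θ₂) :
    θ₁ ^ ((1 - γ - α) / (1 - γ))
        * (lam * θ₁ + (1 - lam) * θ₂) ^ (α / (α - 1))
        / (lam * θ₁ ^ ((1 - γ - α) / (1 - γ))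
            + (1 - lam) * θ₂ ^ ((1 - γ - α) / (1 - γ))) ^ (α / (α - 1))
      ≥ θ₁ * (lam * θ₁ + (1 - lam) * θ₂) ^ ((1 : ℝ) / (α - 1))
        / (lam * θ₁ ^ ((1 - γ - α) / (1 - γ))
            + (1 - lam) * θ₂ ^ ((1 - γ - α) / (1 - γ))) ^ ((1 : ℝ) / (α - 1)) := by
  have hβ : (1 - γ - α) / (1 - γ) = 1 - α / (1 - γ) := by
    field_simp [sub_ne_zero.2 hγ.symm]
  rw [hβ, div_sub_one_eq_one_div_sub_one_add_one hα1]
  set β := 1 - α / (1 - γ)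
  set S := lam * θ₁ + (1 - lam) * θ₂
  set D := lam * θ₁ ^ β + (1 - lam) * θ₂ ^ β
  have h2 : 0 < θ₂ := h1.trans_le h12
  have hS : 0 < S := convexComb_pos h1 h2 hl0 hl1
  have hD : 0 < D := convexComb_pos (rpow_pos_of_pos h1 β) (rpow_pos_of_pos h2 β) hl0 hl1
  have key : θ₁ ≤ θ₁ ^ β * (S / D) := by
    rw [mul_div_assoc', le_div_iff₀ hD]
    exact mul_convexComb_rpow_one_sub_le h1 h12 hpos.le hl1
  rw [ge_iff_le, mul_div_assoc, mul_div_assoc, ← div_rpow hS.le hD.le, ← div_rpow hS.le hD.le]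
  exact mul_rpow_le_mul_rpow_add_one (div_pos hS hD) key _

/-- Key algebraic inequality in the proof of the Proposition of Section 5.2:
with `β = (1-γ-α)/(1-γ)`, `S = λθ₁ + (1-λ)θ₂`, `D = λθ₁^β + (1-λ)θ₂^β`
(real powers), if `0 < θ₁ ≤ θ₂`, `α/(1-γ) > 0`, `0 ≤ λ ≤ 1`, then
`θ₁^β S^{α/(α-1)} / D^{α/(α-1)} ≥ θ₁ S^{1/(α-1)} / D^{1/(α-1)}`. -/
theorem statement7 (γ α lam θ₁ θ₂ : ℝ) (hγ : γ ≠ 1) (hα0 : α ≠ 0) (hα1 : α ≠ 1)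
    (hpos : 0 < α / (1 - γ)) (hl0 : 0 ≤ lam) (hl1 : lam ≤ 1)
    (h1 : 0 < θ₁) (h12 : θ₁ ≤ θ₂) :
    θ₁ ^ ((1 - γ - α) / (1 - γ))
        * (lam * θ₁ + (1 - lam) * θ₂) ^ (α / (α - 1))
        / (lam * θ₁ ^ ((1 - γ - α) / (1 - γ))
            + (1 - lam) * θ₂ ^ ((1 - γ - α) / (1 - γ))) ^ (α / (α - 1))
      ≥ θ₁ * (lam * θ₁ + (1 - lam) * θ₂) ^ ((1 : ℝ) / (α - 1))
        / (lam * θ₁ ^ ((1 - γ - α) / (1 - γ))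
            + (1 - lam) * θ₂ ^ ((1 - γ - α) / (1 - γ))) ^ ((1 : ℝ) / (α - 1)) :=
  statement7_general γ α lam θ₁ θ₂ hγ hα1 hpos hl0 hl1 h1 h12
end

section
/- Let r, μ ∈ ℝ, σ ≠ 0, γ > 0 with γ ≠ 1, α ∉ {0,1} with α/(1−γ) > 0, 0 ≤ λ ≤ 1, and ρ₁ ≥ ρ₂. Suppose (θ₁, θ₂) is a positive solution of the Epstein–Zin equilibrium ODE system (M-HJB) on [t₀,T], where 0 ≤ t₀ < T. Then θ₁(t) ≤ θ₂(t) for every t ∈ [t₀,T]. -/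
noncomputable section

/-- `S(t) = λ θ₁(t) + (1-λ) θ₂(t)`. -/
def mhjbS (lam : ℝ) (θ₁ θ₂ : ℝ → ℝ) (t : ℝ) : ℝ :=
  lam * θ₁ t + (1 - lam) * θ₂ t

/-- `D(t) = λ θ₁(t)^β + (1-λ) θ₂(t)^β` with `β = (1-γ-α)/(1-γ)` (real powers). -/
def mhjbD (γ α lam : ℝ) (θ₁ θ₂ : ℝ → ℝ) (t : ℝ) : ℝ :=
  lam * θ₁ t ^ ((1 - γ - α) / (1 - γ)) + (1 - lam) * θ₂ t ^ ((1 - γ - α) / (1 - γ))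

/-- `C(t) = S(t)^{1/(α-1)} D(t)^{-1/(α-1)}` (real powers). -/
def mhjbC (γ α lam : ℝ) (θ₁ θ₂ : ℝ → ℝ) (t : ℝ) : ℝ :=
  mhjbS lam θ₁ θ₂ t ^ ((1 : ℝ) / (α - 1)) * mhjbD γ α lam θ₁ θ₂ t ^ (-((1 : ℝ) / (α - 1)))

/-- A positive solution of the Epstein–Zin equilibrium ODE system (M-HJB) on `[t₀, T]`:
differentiable positive functions `θ₁, θ₂` with continuous derivatives `θ₁', θ₂'` such that,
for `i = 1, 2` and all `t ∈ [t₀, T]`,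
`θᵢ'(t) + (1-γ)θᵢ(t)[r + (μ-r)²/(2γσ²) - C(t)] - (1-γ)ρᵢ α⁻¹ θᵢ(t)
  + α⁻¹(1-γ) θᵢ(t)^β S(t)^{α/(α-1)} D(t)^{-α/(α-1)} = 0`,
with terminal conditions `θ₁(T) = θ₂(T) = 1`. -/
def IsMHJBSolution (r μ σ ρ₁ ρ₂ γ α lam t₀ T : ℝ) (θ₁ θ₂ : ℝ → ℝ) : Prop :=
  ∃ θ₁' θ₂' : ℝ → ℝ,
    ContinuousOn θ₁' (Set.Icc t₀ T) ∧ ContinuousOn θ₂' (Set.Icc t₀ T) ∧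
    (∀ t ∈ Set.Icc t₀ T, HasDerivWithinAt θ₁ (θ₁' t) (Set.Icc t₀ T) t) ∧
    (∀ t ∈ Set.Icc t₀ T, HasDerivWithinAt θ₂ (θ₂' t) (Set.Icc t₀ T) t) ∧
    (∀ t ∈ Set.Icc t₀ T, 0 < θ₁ t) ∧ (∀ t ∈ Set.Icc t₀ T, 0 < θ₂ t) ∧
    θ₁ T = 1 ∧ θ₂ T = 1 ∧
    (∀ t ∈ Set.Icc t₀ T,
      θ₁' t
        + (1 - γ) * θ₁ t * (r + (μ - r) ^ 2 / (2 * γ * σ ^ 2) - mhjbC γ α lam θ₁ θ₂ t)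
        - (1 - γ) * ρ₁ * α⁻¹ * θ₁ t
        + α⁻¹ * (1 - γ) * θ₁ t ^ ((1 - γ - α) / (1 - γ))
          * mhjbS lam θ₁ θ₂ t ^ (α / (α - 1))
          * mhjbD γ α lam θ₁ θ₂ t ^ (-(α / (α - 1))) = 0) ∧
    (∀ t ∈ Set.Icc t₀ T,
      θ₂' t
        + (1 - γ) * θ₂ t * (r + (μ - r) ^ 2 / (2 * γ * σ ^ 2) - mhjbC γ α lam θ₁ θ₂ t)
        - (1 - γ) * ρ₂ * α⁻¹ * θ₂ t
        + α⁻¹ * (1 - γ) * θ₂ t ^ ((1 - γ - α) / (1 - γ))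
          * mhjbS lam θ₁ θ₂ t ^ (α / (α - 1))
          * mhjbD γ α lam θ₁ θ₂ t ^ (-(α / (α - 1))) = 0)

end

/-!
Put `h = log θ₁ - log θ₂`. Dividing the `i`-th equation by `θᵢ` gives
`θᵢ'/θᵢ = (1-γ)/α · (ρᵢ - E θᵢ^(β-1)) - (1-γ) K`, where `E = S^(α/(α-1)) D^(-α/(α-1)) ≥ 0` and
`K = r + (μ-r)²/(2γσ²) - C` are shared by both components. Hence
`h' = (1-γ)/α · (ρ₁ - ρ₂ + E (θ₂^(β-1) - θ₁^(β-1)))`, and since `(1-γ)/α > 0` and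
`β - 1 = -α/(1-γ) < 0`, this is nonnegative wherever `θ₁ ≥ θ₂`, i.e. wherever `h > 0`.
So `h` cannot decrease while positive, and `h(T) = 0` forbids `h > 0` anywhere on `[t₀, T]`.
-/

open Set Real

lemma nonpos_of_hasDerivWithinAt_nonneg_of_pos {f f' : ℝ → ℝ} {a b : ℝ}
    (hf : ∀ t ∈ Icc a b, HasDerivWithinAt f (f' t) (Icc a b) t)
    (hf' : ∀ t ∈ Ioo a b, 0 < f t → 0 ≤ f' t) (hb : f b ≤ 0) :
    ∀ s ∈ Icc a b, f s ≤ 0 := by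
  intro s hs
  have hcont : ContinuousOn f (Icc a b) := fun t ht => (hf t ht).continuousWithinAt
  have hsb : Icc s b ⊆ Icc a b := Icc_subset_Icc_left hs.1
  -- `sInf A` is the first point of `[s, b]` where `f ≤ 0`; before it `f > 0`, so `f` is monotone.
  set A := Icc s b ∩ f ⁻¹' Iic 0
  have hA : IsClosed A := (hcont.mono hsb).preimage_isClosed_of_isClosed isClosed_Icc isClosed_Iic
  have hA_bdd : BddBelow A := ⟨s, fun t ht => ht.1.1⟩
  obtain ⟨⟨hsτ, hτb⟩, hτ⟩ : sInf A ∈ A := hA.csInf_mem ⟨b, ⟨hs.2, le_rfl⟩, hb⟩ hA_bdd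
  have hpos : ∀ t ∈ Ico s (sInf A), 0 < f t := fun t ht => by
    by_contra! h
    exact (csInf_le hA_bdd ⟨⟨ht.1, ht.2.le.trans hτb⟩, h⟩).not_gt ht.2
  have hsτ_sub : Icc s (sInf A) ⊆ Icc a b := (Icc_subset_Icc_right hτb).trans hsb
  have hmono : MonotoneOn f (Icc s (sInf A)) := by
    refine monotoneOn_of_hasDerivWithinAt_nonneg (f' := f') (convex_Icc _ _) (hcont.mono hsτ_sub)
      (fun t ht => ?_) (fun t ht => ?_) <;> rw [interior_Icc] at ht
    · rw [interior_Icc]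
      exact (hf t (hsτ_sub (Ioo_subset_Icc_self ht))).mono (Ioo_subset_Icc_self.trans hsτ_sub)
    · exact hf' t ⟨hs.1.trans_lt ht.1, ht.2.trans_le hτb⟩ (hpos t (Ioo_subset_Ico_self ht))
  exact (hmono ⟨le_rfl, hsτ⟩ ⟨hsτ, le_rfl⟩ hsτ).trans hτ

lemma div_eq_of_mhjb_eq {x x' c α ρ β K P Q : ℝ} (hx : 0 < x)
    (h : x' + c * x * K - c * ρ * α⁻¹ * x + α⁻¹ * c * x ^ β * P * Q = 0) :
    x' / x = c / α * (ρ - P * Q * x ^ (β - 1)) - c * K := by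
  rw [rpow_sub_one hx.ne', div_eq_iff hx.ne']
  field_simp
  linear_combination h

lemma div_sub_div_nonneg_of_mhjb_eq {x₁ x₂ x₁' x₂' c α ρ₁ ρ₂ β K P Q : ℝ}
    (hcα : 0 ≤ c / α) (hβ : β ≤ 1) (hρ : ρ₂ ≤ ρ₁) (hPQ : 0 ≤ P * Q) (hx₂ : 0 < x₂)
    (hx : x₂ ≤ x₁)
    (h₁ : x₁' + c * x₁ * K - c * ρ₁ * α⁻¹ * x₁ + α⁻¹ * c * x₁ ^ β * P * Q = 0)
    (h₂ : x₂' + c * x₂ * K - c * ρ₂ * α⁻¹ * x₂ + α⁻¹ * c * x₂ ^ β * P * Q = 0) :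
    0 ≤ x₁' / x₁ - x₂' / x₂ := by
  have hpow : x₁ ^ (β - 1) ≤ x₂ ^ (β - 1) := rpow_le_rpow_of_nonpos hx₂ hx (by linarith)
  rw [div_eq_of_mhjb_eq (hx₂.trans_le hx) h₁, div_eq_of_mhjb_eq hx₂ h₂]
  have : 0 ≤ c / α * ((ρ₁ - ρ₂) + P * Q * (x₂ ^ (β - 1) - x₁ ^ (β - 1))) :=
    mul_nonneg hcα (add_nonneg (sub_nonneg.2 hρ) (mul_nonneg hPQ (sub_nonneg.2 hpow)))
  linarith

lemma convex_comb_nonneg {lam a b : ℝ} (hl0 : 0 ≤ lam) (hl1 : lam ≤ 1) (ha : 0 ≤ a)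
    (hb : 0 ≤ b) : 0 ≤ lam * a + (1 - lam) * b :=
  add_nonneg (mul_nonneg hl0 ha) (mul_nonneg (sub_nonneg.2 hl1) hb)

theorem statement8_general (r μ σ ρ₁ ρ₂ γ α lam t₀ T : ℝ)
    (hαγ : 0 < α / (1 - γ)) (hl0 : 0 ≤ lam) (hl1 : lam ≤ 1) (hρ : ρ₂ ≤ ρ₁)
    (θ₁ θ₂ : ℝ → ℝ)
    (hsol : IsMHJBSolution r μ σ ρ₁ ρ₂ γ α lam t₀ T θ₁ θ₂) :
    ∀ t ∈ Set.Icc t₀ T, θ₁ t ≤ θ₂ t := by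
  obtain ⟨θ₁', θ₂', -, -, hd₁, hd₂, hpos₁, hpos₂, hT₁, hT₂, heq₁, heq₂⟩ := hsol
  have hcα : 0 < (1 - γ) / α := by rw [← inv_div]; exact inv_pos.2 hαγ
  have hγ' : 1 - γ ≠ 0 := fun h => by simp [h] at hαγ
  have hβ : (1 - γ - α) / (1 - γ) ≤ 1 := by
    rw [sub_div, div_self hγ']; linarith
  have hlog : ∀ t ∈ Icc t₀ T, log (θ₁ t) - log (θ₂ t) ≤ 0 := by
    refine nonpos_of_hasDerivWithinAt_nonneg_of_pos
      (fun t ht => ((hd₁ t ht).log (hpos₁ t ht).ne').sub ((hd₂ t ht).log (hpos₂ t ht).ne'))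
      (fun t ht hlt => ?_) (by simp [hT₁, hT₂])
    have ht' := Ioo_subset_Icc_self ht
    rw [sub_pos, log_lt_log_iff (hpos₂ t ht') (hpos₁ t ht')] at hlt
    have hS := convex_comb_nonneg hl0 hl1 (hpos₁ t ht').le (hpos₂ t ht').le
    have hD := convex_comb_nonneg hl0 hl1 (rpow_nonneg (hpos₁ t ht').le ((1 - γ - α) / (1 - γ)))
      (rpow_nonneg (hpos₂ t ht').le ((1 - γ - α) / (1 - γ)))
    exact div_sub_div_nonneg_of_mhjb_eq hcα.le hβ hρ
      (mul_nonneg (rpow_nonneg hS _) (rpow_nonneg hD _)) (hpos₂ t ht') hlt.le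
      (heq₁ t ht') (heq₂ t ht')
  intro t ht
  rw [← log_le_log_iff (hpos₁ t ht) (hpos₂ t ht)]
  linarith [hlog t ht]

/-- Proposition of Section 5.2, comparison step: for a positive solution of (M-HJB)
with `ρ₁ ≥ ρ₂`, one has `θ₁ ≤ θ₂` on `[t₀, T]`. -/
theorem statement8 (r μ σ ρ₁ ρ₂ γ α lam t₀ T : ℝ)
    (hσ : σ ≠ 0) (hγ : 0 < γ) (hγ1 : γ ≠ 1) (hα0 : α ≠ 0) (hα1 : α ≠ 1)
    (hαγ : 0 < α / (1 - γ)) (hl0 : 0 ≤ lam) (hl1 : lam ≤ 1) (hρ : ρ₂ ≤ ρ₁)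
    (ht₀ : 0 ≤ t₀) (ht₀T : t₀ < T) (θ₁ θ₂ : ℝ → ℝ)
    (hsol : IsMHJBSolution r μ σ ρ₁ ρ₂ γ α lam t₀ T θ₁ θ₂) :
    ∀ t ∈ Set.Icc t₀ T, θ₁ t ≤ θ₂ t :=
  statement8_general r μ σ ρ₁ ρ₂ γ α lam t₀ T hαγ hl0 hl1 hρ θ₁ θ₂ hsol
end

section
/- Let T > 0 and let r, μ ∈ ℝ, σ ≠ 0, γ > 0 with γ ≠ 1, α ∉ {0,1} with α/(1−γ) > 0 and (1/α − 1)·(1−γ) ≥ 0, 0 < λ < 1, and ρ₁ ≥ ρ₂. Then there exist constants δ > 0 and κ > 0, depending only on r, μ, σ, ρ₁, ρ₂, γ, α, λ and T (and in particular independent of t₀), such that for every t₀ ∈ [0,T) and every positive solution (θ₁, θ₂) of the Epstein–Zin equilibrium ODE system (M-HJB) on [t₀,T], one has δ ≤ θᵢ(t) ≤ κ for i = 1, 2 and all t ∈ [t₀,T]. -/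
open Set Real

section BackwardComparison

variable {f f' : ℝ → ℝ} {a b : ℝ}

theorem mul_exp_le_of_deriv_le_mul {c : ℝ}
    (hf : ∀ t ∈ Icc a b, HasDerivWithinAt f (f' t) (Icc a b) t)
    (hle : ∀ t ∈ Ioo a b, f' t ≤ c * f t) :
    ∀ t ∈ Icc a b, f b * exp (c * (t - b)) ≤ f t := by
  set g : ℝ → ℝ := fun s => f s * exp (-(c * s))
  have hg : ∀ t ∈ Icc a b,
      HasDerivWithinAt g ((f' t - c * f t) * exp (-(c * t))) (Icc a b) t := fun t ht =>
    ((hf t ht).mul ((hasDerivAt_id' t).const_mul c).fun_neg.exp.hasDerivWithinAt).congr_deriv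
      (by ring)
  have hanti : AntitoneOn g (Icc a b) := by
    refine antitoneOn_of_hasDerivWithinAt_nonpos (f' := fun t => (f' t - c * f t) * exp (-(c * t)))
      (convex_Icc a b)
      (fun t ht => (hg t ht).continuousWithinAt) (fun t ht => ?_) (fun t ht => ?_) <;>
      simp only [interior_Icc] at ht ⊢
    · exact (hg t (Ioo_subset_Icc_self ht)).mono Ioo_subset_Icc_self
    · exact mul_nonpos_of_nonpos_of_nonneg (sub_nonpos.2 (hle t ht)) (exp_pos _).le
  intro t ht
  calc f b * exp (c * (t - b)) = g b * exp (c * t) := by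
        simp only [g]; rw [mul_assoc, ← exp_add]; ring_nf
    _ ≤ g t * exp (c * t) := by
        gcongr; exact hanti ht (right_mem_Icc.2 (ht.1.trans ht.2)) ht.2
    _ = f t := by simp only [g]; rw [mul_assoc, ← exp_add]; simp

theorem le_mul_exp_of_mul_le_deriv {c : ℝ}
    (hf : ∀ t ∈ Icc a b, HasDerivWithinAt f (f' t) (Icc a b) t)
    (hle : ∀ t ∈ Ioo a b, c * f t ≤ f' t) :
    ∀ t ∈ Icc a b, f t ≤ f b * exp (c * (t - b)) := by
  intro t ht
  simpa using mul_exp_le_of_deriv_le_mul (f := -f) (f' := -f') (c := c)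
    (fun s hs => (hf s hs).neg) (fun s hs => by simpa using hle s hs) t ht

theorem nonpos_of_neg_mul_le_deriv {Λ : ℝ}
    (hf : ∀ t ∈ Icc a b, HasDerivWithinAt f (f' t) (Icc a b) t) (hb : f b ≤ 0)
    (hle : ∀ t ∈ Ioo a b, 0 < f t → -Λ * f t ≤ f' t) :
    ∀ t ∈ Icc a b, f t ≤ 0 := by
  intro t ht
  by_contra! hpos
  have hcont : ContinuousOn f (Icc t b) :=
    fun s hs => ((hf s (Icc_subset_Icc_left ht.1 hs)).continuousWithinAt).mono
      (Icc_subset_Icc_left ht.1)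
  -- `u` is the first zero of `f` after `t`; Grönwall on `[t, u]` then forces `f t ≤ 0`.
  obtain ⟨u, ⟨⟨htu, hub⟩, hfu⟩, hmin⟩ : ∃ u, IsLeast {s ∈ Icc t b | f s ≤ 0} u :=
    (isCompact_Icc.of_isClosed_subset
      (hcont.preimage_isClosed_of_isClosed isClosed_Icc isClosed_Iic)
      (sep_subset _ _)).exists_isLeast ⟨b, ⟨ht.2, le_rfl⟩, hb⟩
  have hsub : Icc t u ⊆ Icc a b := Icc_subset_Icc ht.1 hub
  have hfpos : ∀ s ∈ Ioo t u, 0 < f s := fun s hs => by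
    by_contra! hs'
    exact (hmin ⟨⟨hs.1.le, hs.2.le.trans hub⟩, hs'⟩).not_gt hs.2
  have := le_mul_exp_of_mul_le_deriv (fun s hs => (hf s (hsub hs)).mono hsub)
    (fun s hs => hle s ⟨ht.1.trans_lt hs.1, hs.2.trans_le hub⟩ (hfpos s hs)) t ⟨le_rfl, htu⟩
  exact hpos.not_ge (this.trans (mul_nonpos_of_nonpos_of_nonneg hfu (exp_pos _).le))

end BackwardComparison

theorem rpow_sub_rpow_le {x y p : ℝ} (hy : 0 < y) (hyx : y ≤ x) (hp : p ≤ 1) :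
    x ^ p - y ^ p ≤ |p| * y ^ (p - 1) * (x - y) := by
  have hderiv : ∀ c ∈ Ici y, HasDerivAt (fun x : ℝ => x ^ p) (p * c ^ (p - 1)) c :=
    fun c hc => hasDerivAt_rpow_const (Or.inl (hy.trans_le hc).ne')
  refine (convex_Ici y).image_sub_le_mul_sub_of_deriv_le
    (fun c hc => (hderiv c hc).continuousAt.continuousWithinAt)
    (fun c hc => (hderiv c (interior_subset hc)).differentiableAt.differentiableWithinAt)
    (fun c hc => ?_) y (mem_Ici.2 le_rfl) x hyx hyx
  rw [interior_Ici] at hc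
  rw [(hderiv c (mem_Ici.2 hc.le)).deriv]
  calc p * c ^ (p - 1) ≤ |p| * c ^ (p - 1) :=
        mul_le_mul_of_nonneg_right (le_abs_self p) (rpow_nonneg (hy.trans hc).le _)
    _ ≤ |p| * y ^ (p - 1) :=
        mul_le_mul_of_nonneg_left (rpow_le_rpow_of_nonpos hy hc.le (by linarith)) (abs_nonneg p)

theorem rpow_mul_le_rpow_mul {x y p : ℝ} (hx : 0 < x) (hxy : x ≤ y) (hp : p ≤ 1) :
    y ^ p * x ≤ x ^ p * y := by
  have := rpow_le_rpow_of_nonpos hx hxy (sub_nonpos.2 hp)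
  rwa [rpow_sub_one (hx.trans_le hxy).ne', rpow_sub_one hx.ne',
    div_le_div_iff₀ (hx.trans_le hxy) hx] at this

theorem mul_inv_pos_of_div_pos {a b : ℝ} (h : 0 < a / b) : 0 < b * a⁻¹ := by
  simpa [inv_div, div_eq_mul_inv] using inv_pos.2 h

theorem sub_div_lt_one_of_div_pos {a b : ℝ} (h : 0 < a / b) : (b - a) / b < 1 := by
  have hb : b ≠ 0 := fun hb => by simp [hb] at h
  rw [sub_div, div_self hb]
  linarith

theorem le_one_of_div_pos_of_nonneg {a b : ℝ} (h : 0 < a / b) (hsgn : 0 ≤ (1 / a - 1) * b) :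
    a ≤ 1 := by
  have hb : b ≠ 0 := fun hb => by simp [hb] at h
  have ha : a ≠ 0 := fun ha => by simp [ha] at h
  have := mul_nonneg hsgn h.le
  rw [show (1 / a - 1) * b * (a / b) = 1 - a by field_simp] at this
  linarith

noncomputable def mertonRate (r μ σ γ : ℝ) : ℝ := r + (μ - r) ^ 2 / (2 * γ * σ ^ 2)

/-- The right-hand side of (M-HJB) solved for `θᵢ'`, as a function of `c = C(t)`,
`q = S(t) / D(t)` and `x = θᵢ(t)`. -/
noncomputable def mhjbDrift (r μ σ γ α ρ c q x : ℝ) : ℝ :=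
  (1 - γ) * (ρ * α⁻¹ - mertonRate r μ σ γ) * x
    + (1 - γ) * c * (x - α⁻¹ * x ^ ((1 - γ - α) / (1 - γ)) * q)

section MHJB

variable {r μ σ γ α lam ρ ρ₁ ρ₂ t₀ T t c q x y : ℝ} {θ₁ θ₂ : ℝ → ℝ}

local notation "β" => (1 - γ - α) / (1 - γ)

theorem mhjbDrift_le (hA : 0 ≤ (1 - γ) * α⁻¹) (hsgn : 0 ≤ (1 / α - 1) * (1 - γ)) (hc : 0 ≤ c)
    (hx : 0 ≤ x) (hxq : x ≤ x ^ β * q) :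
    mhjbDrift r μ σ γ α ρ c q x ≤ (1 - γ) * (ρ * α⁻¹ - mertonRate r μ σ γ) * x := by
  have : (1 - γ) * (x - α⁻¹ * x ^ β * q) ≤ 0 := by
    linear_combination mul_le_mul_of_nonneg_left hxq hA + mul_nonneg hsgn hx
  unfold mhjbDrift
  linear_combination mul_nonpos_of_nonneg_of_nonpos hc this

theorem le_mhjbDrift {M : ℝ} (hA : 0 ≤ (1 - γ) * α⁻¹) (hsgn : 0 ≤ (1 / α - 1) * (1 - γ))
    (hc : 0 ≤ c) (hcM : c ≤ M) (hx : 0 ≤ x) (hxq : x ^ β * q ≤ x) :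
    ((1 - γ) * (ρ * α⁻¹ - mertonRate r μ σ γ) + (1 - γ) * (1 - α⁻¹) * M) * x
      ≤ mhjbDrift r μ σ γ α ρ c q x := by
  have hE : (1 - γ) * (1 - α⁻¹) * x ≤ 0 := by linear_combination mul_nonneg hsgn hx
  have : (1 - γ) * (1 - α⁻¹) * x ≤ (1 - γ) * (x - α⁻¹ * x ^ β * q) := by
    linear_combination mul_le_mul_of_nonneg_left hxq hA
  unfold mhjbDrift
  linear_combination mul_le_mul_of_nonneg_left this hc + mul_le_mul_of_nonpos_right hcM hE

theorem neg_mul_sub_le_mhjbDrift_sub (hA : 0 ≤ (1 - γ) * α⁻¹) (hβ : β ≤ 1) (hρ : ρ₂ ≤ ρ₁)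
    (hc : 0 ≤ c) (hq : 0 ≤ q) (hy : 0 < y) (hyx : y ≤ x) :
    -(|(1 - γ) * (c - mertonRate r μ σ γ)| + |(1 - γ) * α⁻¹ * ρ₂|
        + (1 - γ) * α⁻¹ * c * q * (|β| * y ^ (β - 1))) * (x - y)
      ≤ mhjbDrift r μ σ γ α ρ₁ c q x - mhjbDrift r μ σ γ α ρ₂ c q y := by
  have hxy : 0 ≤ x - y := sub_nonneg.2 hyx
  have h₁ := mul_le_mul_of_nonneg_right (neg_abs_le ((1 - γ) * (c - mertonRate r μ σ γ))) hxy
  have h₂ := mul_le_mul_of_nonneg_right (neg_abs_le ((1 - γ) * α⁻¹ * ρ₂)) hxy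
  have h₃ := mul_le_mul_of_nonneg_left (rpow_sub_rpow_le hy hyx hβ)
    (mul_nonneg (mul_nonneg hA hc) hq)
  have h₄ : 0 ≤ (1 - γ) * α⁻¹ * ((ρ₁ - ρ₂) * x) :=
    mul_nonneg hA (mul_nonneg (sub_nonneg.2 hρ) (hy.le.trans hyx))
  unfold mhjbDrift
  linear_combination h₁ + h₂ + h₃ + h₄

theorem mhjbS_pos (hl0 : 0 ≤ lam) (hl1 : lam ≤ 1) (h₁ : 0 < θ₁ t) (h₂ : 0 < θ₂ t) :
    0 < mhjbS lam θ₁ θ₂ t := by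
  simpa [mhjbS] using convex_Ioi (0 : ℝ) h₁ h₂ hl0 (sub_nonneg.2 hl1) (by ring)

theorem mhjbD_pos (hl0 : 0 ≤ lam) (hl1 : lam ≤ 1) (h₁ : 0 < θ₁ t) (h₂ : 0 < θ₂ t) :
    0 < mhjbD γ α lam θ₁ θ₂ t := by
  simpa [mhjbD] using convex_Ioi (0 : ℝ) (rpow_pos_of_pos h₁ β) (rpow_pos_of_pos h₂ β) hl0
    (sub_nonneg.2 hl1) (by ring)

theorem mhjbC_eq_rpow (hS : 0 ≤ mhjbS lam θ₁ θ₂ t) (hD : 0 ≤ mhjbD γ α lam θ₁ θ₂ t) :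
    mhjbC γ α lam θ₁ θ₂ t = (mhjbS lam θ₁ θ₂ t / mhjbD γ α lam θ₁ θ₂ t) ^ (1 / (α - 1)) := by
  rw [mhjbC, rpow_neg hD, ← div_eq_mul_inv, div_rpow hS hD]

theorem mhjbC_pos (hl0 : 0 ≤ lam) (hl1 : lam ≤ 1) (h₁ : 0 < θ₁ t) (h₂ : 0 < θ₂ t) :
    0 < mhjbC γ α lam θ₁ θ₂ t := by
  have hS := mhjbS_pos hl0 hl1 h₁ h₂
  have hD := mhjbD_pos (γ := γ) (α := α) hl0 hl1 h₁ h₂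
  rw [mhjbC_eq_rpow hS.le hD.le]
  exact rpow_pos_of_pos (div_pos hS hD) _

theorem le_rpow_mul_mhjbS_div_mhjbD (hl0 : 0 ≤ lam) (hl1 : lam ≤ 1) (hβ : β ≤ 1)
    (h₁ : 0 < θ₁ t) (h₁₂ : θ₁ t ≤ θ₂ t) :
    θ₁ t ≤ θ₁ t ^ β * (mhjbS lam θ₁ θ₂ t / mhjbD γ α lam θ₁ θ₂ t) ∧
      θ₂ t ^ β * (mhjbS lam θ₁ θ₂ t / mhjbD γ α lam θ₁ θ₂ t) ≤ θ₂ t := by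
  have hD := mhjbD_pos (γ := γ) (α := α) hl0 hl1 h₁ (h₁.trans_le h₁₂)
  have key := rpow_mul_le_rpow_mul h₁ h₁₂ hβ
  rw [← mul_div_assoc, le_div_iff₀ hD, ← mul_div_assoc, div_le_iff₀ hD]
  simp only [mhjbS, mhjbD]
  exact ⟨by linear_combination mul_le_mul_of_nonneg_left key (sub_nonneg.2 hl1),
    by linear_combination mul_le_mul_of_nonneg_left key hl0⟩

theorem mhjbC_le {δ : ℝ} (hl0 : 0 ≤ lam) (hl1 : lam ≤ 1) (hα : α ≤ 1) (hβ : β ≤ 1) (hδ : 0 < δ)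
    (hδθ : δ ≤ θ₁ t) (h₁₂ : θ₁ t ≤ θ₂ t) :
    mhjbC γ α lam θ₁ θ₂ t ≤ (δ ^ (1 - β)) ^ (1 / (α - 1)) := by
  have h₁ := hδ.trans_le hδθ
  have hS := mhjbS_pos hl0 hl1 h₁ (h₁.trans_le h₁₂)
  have hD := mhjbD_pos (γ := γ) (α := α) hl0 hl1 h₁ (h₁.trans_le h₁₂)
  have hq : θ₁ t ^ (1 - β) ≤ mhjbS lam θ₁ θ₂ t / mhjbD γ α lam θ₁ θ₂ t := by
    rw [rpow_sub h₁, rpow_one, div_le_iff₀ (rpow_pos_of_pos h₁ _), mul_comm]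
    exact (le_rpow_mul_mhjbS_div_mhjbD hl0 hl1 hβ h₁ h₁₂).1
  rw [mhjbC_eq_rpow hS.le hD.le]
  exact rpow_le_rpow_of_nonpos (rpow_pos_of_pos hδ _)
    ((rpow_le_rpow hδ.le hδθ (sub_nonneg.2 hβ)).trans hq) (one_div_nonpos.2 (sub_nonpos.2 hα))

theorem continuousOn_mhjbS_div_mhjbD {s : Set ℝ} (hl0 : 0 ≤ lam) (hl1 : lam ≤ 1)
    (hθ₁ : ContinuousOn θ₁ s) (hθ₂ : ContinuousOn θ₂ s) (hpos : ∀ t ∈ s, 0 < θ₁ t ∧ 0 < θ₂ t) :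
    ContinuousOn (fun t => mhjbS lam θ₁ θ₂ t / mhjbD γ α lam θ₁ θ₂ t) s := by
  unfold mhjbS mhjbD
  exact ((continuousOn_const.mul hθ₁).add (continuousOn_const.mul hθ₂)).div
    ((continuousOn_const.mul (hθ₁.rpow_const fun t ht => Or.inl (hpos t ht).1.ne')).add
      (continuousOn_const.mul (hθ₂.rpow_const fun t ht => Or.inl (hpos t ht).2.ne')))
    fun t ht => (mhjbD_pos hl0 hl1 (hpos t ht).1 (hpos t ht).2).ne'

theorem continuousOn_mhjbC {s : Set ℝ} (hl0 : 0 ≤ lam) (hl1 : lam ≤ 1)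
    (hθ₁ : ContinuousOn θ₁ s) (hθ₂ : ContinuousOn θ₂ s) (hpos : ∀ t ∈ s, 0 < θ₁ t ∧ 0 < θ₂ t) :
    ContinuousOn (mhjbC γ α lam θ₁ θ₂) s := by
  have hS t ht := mhjbS_pos hl0 hl1 (hpos t ht).1 (hpos t ht).2
  have hD t ht := mhjbD_pos (γ := γ) (α := α) hl0 hl1 (hpos t ht).1 (hpos t ht).2
  refine ((continuousOn_mhjbS_div_mhjbD hl0 hl1 hθ₁ hθ₂ hpos).rpow_const (p := 1 / (α - 1))
    fun t ht => Or.inl (div_pos (hS t ht) (hD t ht)).ne').congr fun t ht => ?_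
  exact mhjbC_eq_rpow (hS t ht).le (hD t ht).le

theorem eq_mhjbDrift_of_mhjb_eq_zero {x x' : ℝ} (hα1 : α ≠ 1) (hS : 0 < mhjbS lam θ₁ θ₂ t)
    (hD : 0 < mhjbD γ α lam θ₁ θ₂ t)
    (h : x' + (1 - γ) * x * (r + (μ - r) ^ 2 / (2 * γ * σ ^ 2) - mhjbC γ α lam θ₁ θ₂ t)
      - (1 - γ) * ρ * α⁻¹ * x
      + α⁻¹ * (1 - γ) * x ^ β * mhjbS lam θ₁ θ₂ t ^ (α / (α - 1))
        * mhjbD γ α lam θ₁ θ₂ t ^ (-(α / (α - 1))) = 0) :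
    x' = mhjbDrift r μ σ γ α ρ (mhjbC γ α lam θ₁ θ₂ t)
      (mhjbS lam θ₁ θ₂ t / mhjbD γ α lam θ₁ θ₂ t) x := by
  have key : mhjbS lam θ₁ θ₂ t ^ (α / (α - 1)) * mhjbD γ α lam θ₁ θ₂ t ^ (-(α / (α - 1)))
      = mhjbS lam θ₁ θ₂ t / mhjbD γ α lam θ₁ θ₂ t * mhjbC γ α lam θ₁ θ₂ t := by
    rw [mhjbC_eq_rpow hS.le hD.le, rpow_neg hD.le, ← div_eq_mul_inv, ← div_rpow hS.le hD.le,
      show α / (α - 1) = 1 + 1 / (α - 1) by field_simp [sub_ne_zero.2 hα1]; ring,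
      rpow_add (div_pos hS hD), rpow_one]
  unfold mhjbDrift mertonRate
  linear_combination h - α⁻¹ * (1 - γ) * x ^ β * key

theorem IsMHJBSolution.pos (h : IsMHJBSolution r μ σ ρ₁ ρ₂ γ α lam t₀ T θ₁ θ₂) :
    ∀ t ∈ Icc t₀ T, 0 < θ₁ t ∧ 0 < θ₂ t := by
  obtain ⟨-, -, -, -, -, -, h₁, h₂, -⟩ := h
  exact fun t ht => ⟨h₁ t ht, h₂ t ht⟩

theorem IsMHJBSolution.terminal (h : IsMHJBSolution r μ σ ρ₁ ρ₂ γ α lam t₀ T θ₁ θ₂) :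
    θ₁ T = 1 ∧ θ₂ T = 1 := by
  obtain ⟨-, -, -, -, -, -, -, -, h₁, h₂, -⟩ := h
  exact ⟨h₁, h₂⟩

theorem IsMHJBSolution.hasDerivWithinAt_mhjbDrift
    (h : IsMHJBSolution r μ σ ρ₁ ρ₂ γ α lam t₀ T θ₁ θ₂) (hα1 : α ≠ 1) (hl0 : 0 ≤ lam)
    (hl1 : lam ≤ 1) :
    (∀ t ∈ Icc t₀ T, HasDerivWithinAt θ₁ (mhjbDrift r μ σ γ α ρ₁ (mhjbC γ α lam θ₁ θ₂ t)
      (mhjbS lam θ₁ θ₂ t / mhjbD γ α lam θ₁ θ₂ t) (θ₁ t)) (Icc t₀ T) t) ∧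
    (∀ t ∈ Icc t₀ T, HasDerivWithinAt θ₂ (mhjbDrift r μ σ γ α ρ₂ (mhjbC γ α lam θ₁ θ₂ t)
      (mhjbS lam θ₁ θ₂ t / mhjbD γ α lam θ₁ θ₂ t) (θ₂ t)) (Icc t₀ T) t) := by
  obtain ⟨θ₁', θ₂', -, -, hd₁, hd₂, hp₁, hp₂, -, -, he₁, he₂⟩ := h
  have hS t ht := mhjbS_pos hl0 hl1 (hp₁ t ht) (hp₂ t ht)
  have hD t ht := mhjbD_pos (γ := γ) (α := α) hl0 hl1 (hp₁ t ht) (hp₂ t ht)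
  exact ⟨fun t ht => (hd₁ t ht).congr_deriv
      (eq_mhjbDrift_of_mhjb_eq_zero hα1 (hS t ht) (hD t ht) (he₁ t ht)),
    fun t ht => (hd₂ t ht).congr_deriv
      (eq_mhjbDrift_of_mhjb_eq_zero hα1 (hS t ht) (hD t ht) (he₂ t ht))⟩

theorem IsMHJBSolution.fst_le_snd (h : IsMHJBSolution r μ σ ρ₁ ρ₂ γ α lam t₀ T θ₁ θ₂)
    (hα1 : α ≠ 1) (hl0 : 0 ≤ lam) (hl1 : lam ≤ 1) (hαγ : 0 < α / (1 - γ)) (hρ : ρ₂ ≤ ρ₁) :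
    ∀ t ∈ Icc t₀ T, θ₁ t ≤ θ₂ t := by
  obtain ⟨hd₁, hd₂⟩ := h.hasDerivWithinAt_mhjbDrift hα1 hl0 hl1
  have hpos := h.pos
  have hθ₁ : ContinuousOn θ₁ (Icc t₀ T) := fun t ht => (hd₁ t ht).continuousWithinAt
  have hθ₂ : ContinuousOn θ₂ (Icc t₀ T) := fun t ht => (hd₂ t ht).continuousWithinAt
  have hC := continuousOn_mhjbC (γ := γ) (α := α) hl0 hl1 hθ₁ hθ₂ hpos
  have hq := continuousOn_mhjbS_div_mhjbD (γ := γ) (α := α) hl0 hl1 hθ₁ hθ₂ hpos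
  have hθ₂β : ContinuousOn (fun t => θ₂ t ^ (β - 1)) (Icc t₀ T) :=
    hθ₂.rpow_const fun t ht => Or.inl (hpos t ht).2.ne'
  obtain ⟨Λ, hΛ⟩ := isCompact_Icc.exists_bound_of_continuousOn (f := fun t =>
      |(1 - γ) * (mhjbC γ α lam θ₁ θ₂ t - mertonRate r μ σ γ)| + |(1 - γ) * α⁻¹ * ρ₂|
        + (1 - γ) * α⁻¹ * mhjbC γ α lam θ₁ θ₂ t * (mhjbS lam θ₁ θ₂ t / mhjbD γ α lam θ₁ θ₂ t)
          * (|β| * θ₂ t ^ (β - 1))) (by fun_prop)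
  refine fun t ht => sub_nonpos.1 (nonpos_of_neg_mul_le_deriv (Λ := Λ)
    (fun s hs => (hd₁ s hs).sub (hd₂ s hs)) (by simp [h.terminal]) (fun s hs hfs => ?_) t ht)
  have hs' := Ioo_subset_Icc_self hs
  obtain ⟨h₁, h₂⟩ := hpos s hs'
  refine le_trans ?_ (neg_mul_sub_le_mhjbDrift_sub (mul_inv_pos_of_div_pos hαγ).le
    (sub_div_lt_one_of_div_pos hαγ).le hρ (mhjbC_pos hl0 hl1 h₁ h₂).le
    (div_pos (mhjbS_pos hl0 hl1 h₁ h₂) (mhjbD_pos hl0 hl1 h₁ h₂)).le h₂ (sub_nonneg.1 hfs.le))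
  exact mul_le_mul_of_nonneg_right (neg_le_neg ((le_abs_self _).trans (hΛ s hs'))) hfs.le

theorem IsMHJBSolution.exp_le_fst (h : IsMHJBSolution r μ σ ρ₁ ρ₂ γ α lam t₀ T θ₁ θ₂)
    (hα1 : α ≠ 1) (hl0 : 0 ≤ lam) (hl1 : lam ≤ 1) (hαγ : 0 < α / (1 - γ))
    (hsgn : 0 ≤ (1 / α - 1) * (1 - γ)) (hρ : ρ₂ ≤ ρ₁) :
    ∀ t ∈ Icc t₀ T, exp ((1 - γ) * (ρ₁ * α⁻¹ - mertonRate r μ σ γ) * (t - T)) ≤ θ₁ t := by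
  obtain ⟨hd₁, -⟩ := h.hasDerivWithinAt_mhjbDrift hα1 hl0 hl1
  have hord := h.fst_le_snd hα1 hl0 hl1 hαγ hρ
  have hdrift : ∀ s ∈ Ioo t₀ T, mhjbDrift r μ σ γ α ρ₁ (mhjbC γ α lam θ₁ θ₂ s)
      (mhjbS lam θ₁ θ₂ s / mhjbD γ α lam θ₁ θ₂ s) (θ₁ s)
      ≤ (1 - γ) * (ρ₁ * α⁻¹ - mertonRate r μ σ γ) * θ₁ s := fun s hs => by
    have hs' := Ioo_subset_Icc_self hs
    obtain ⟨h₁, h₂⟩ := h.pos s hs'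
    exact mhjbDrift_le (mul_inv_pos_of_div_pos hαγ).le hsgn (mhjbC_pos hl0 hl1 h₁ h₂).le h₁.le
      (le_rpow_mul_mhjbS_div_mhjbD hl0 hl1 (sub_div_lt_one_of_div_pos hαγ).le h₁ (hord s hs')).1
  intro t ht
  simpa [h.terminal.1] using mul_exp_le_of_deriv_le_mul hd₁ hdrift t ht

theorem IsMHJBSolution.snd_le_exp (h : IsMHJBSolution r μ σ ρ₁ ρ₂ γ α lam t₀ T θ₁ θ₂)
    (hα1 : α ≠ 1) (hl0 : 0 ≤ lam) (hl1 : lam ≤ 1) (hαγ : 0 < α / (1 - γ))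
    (hsgn : 0 ≤ (1 / α - 1) * (1 - γ)) (hρ : ρ₂ ≤ ρ₁) {δ : ℝ} (hδ : 0 < δ)
    (hδθ : ∀ t ∈ Icc t₀ T, δ ≤ θ₁ t) :
    ∀ t ∈ Icc t₀ T, θ₂ t ≤ exp (((1 - γ) * (ρ₂ * α⁻¹ - mertonRate r μ σ γ)
      + (1 - γ) * (1 - α⁻¹) * (δ ^ (1 - β)) ^ (1 / (α - 1))) * (t - T)) := by
  obtain ⟨-, hd₂⟩ := h.hasDerivWithinAt_mhjbDrift hα1 hl0 hl1
  have hord := h.fst_le_snd hα1 hl0 hl1 hαγ hρ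
  have hβ := (sub_div_lt_one_of_div_pos hαγ).le
  have hdrift : ∀ s ∈ Ioo t₀ T, ((1 - γ) * (ρ₂ * α⁻¹ - mertonRate r μ σ γ)
      + (1 - γ) * (1 - α⁻¹) * (δ ^ (1 - β)) ^ (1 / (α - 1))) * θ₂ s
      ≤ mhjbDrift r μ σ γ α ρ₂ (mhjbC γ α lam θ₁ θ₂ s)
        (mhjbS lam θ₁ θ₂ s / mhjbD γ α lam θ₁ θ₂ s) (θ₂ s) := fun s hs => by
    have hs' := Ioo_subset_Icc_self hs
    obtain ⟨h₁, h₂⟩ := h.pos s hs'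
    exact le_mhjbDrift (mul_inv_pos_of_div_pos hαγ).le hsgn (mhjbC_pos hl0 hl1 h₁ h₂).le
      (mhjbC_le hl0 hl1 (le_one_of_div_pos_of_nonneg hαγ hsgn) hβ hδ (hδθ s hs') (hord s hs')) h₂.le
      (le_rpow_mul_mhjbS_div_mhjbD hl0 hl1 hβ h₁ (hord s hs')).2
  intro t ht
  simpa [h.terminal.2] using le_mul_exp_of_mul_le_deriv hd₂ hdrift t ht

end MHJB

theorem abs_mul_sub_le_abs_mul {c t₀ t T : ℝ} (ht₀ : 0 ≤ t₀) (ht : t ∈ Icc t₀ T) :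
    |c * (t - T)| ≤ |c| * T := by
  rw [abs_mul, abs_of_nonpos (sub_nonpos.2 ht.2)]
  exact mul_le_mul_of_nonneg_left (by linarith [ht.1]) (abs_nonneg c)

theorem statement10_general (r μ σ ρ₁ ρ₂ γ α lam T : ℝ) (hα1 : α ≠ 1)
    (hαγ : 0 < α / (1 - γ)) (hsgn : 0 ≤ (1 / α - 1) * (1 - γ))
    (hl0 : 0 < lam) (hl1 : lam < 1) (hρ : ρ₂ ≤ ρ₁) :
    ∃ δ > (0 : ℝ), ∃ κ > (0 : ℝ),
      ∀ t₀ : ℝ, 0 ≤ t₀ → t₀ < T →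
      ∀ θ₁ θ₂ : ℝ → ℝ, IsMHJBSolution r μ σ ρ₁ ρ₂ γ α lam t₀ T θ₁ θ₂ →
      ∀ t ∈ Set.Icc t₀ T,
        (δ ≤ θ₁ t ∧ θ₁ t ≤ κ) ∧ (δ ≤ θ₂ t ∧ θ₂ t ≤ κ) := by
  set δ := exp (-(|(1 - γ) * (ρ₁ * α⁻¹ - mertonRate r μ σ γ)| * T))
  set c := (1 - γ) * (ρ₂ * α⁻¹ - mertonRate r μ σ γ)
    + (1 - γ) * (1 - α⁻¹) * (δ ^ (1 - (1 - γ - α) / (1 - γ))) ^ (1 / (α - 1))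
  refine ⟨δ, exp_pos _, exp (|c| * T), exp_pos _, fun t₀ ht₀ _ θ₁ θ₂ h t ht => ?_⟩
  have hord := h.fst_le_snd hα1 hl0.le hl1.le hαγ hρ
  have hlow : ∀ s ∈ Icc t₀ T, δ ≤ θ₁ s := fun s hs =>
    (exp_le_exp.2 (neg_le_of_abs_le (abs_mul_sub_le_abs_mul ht₀ hs))).trans
      (h.exp_le_fst hα1 hl0.le hl1.le hαγ hsgn hρ s hs)
  have hup : θ₂ t ≤ exp (|c| * T) :=
    (h.snd_le_exp hα1 hl0.le hl1.le hαγ hsgn hρ (exp_pos _) hlow t ht).trans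
      (exp_le_exp.2 (le_of_abs_le (abs_mul_sub_le_abs_mul ht₀ ht)))
  exact ⟨⟨hlow t ht, (hord t ht).trans hup⟩, (hlow t ht).trans (hord t ht), hup⟩

/-- Proposition of Section 5.2, uniform a priori bound: there exist constants
`δ, κ > 0`, independent of the initial time `t₀`, such that every positive
solution of (M-HJB) on `[t₀, T]` satisfies `δ ≤ θᵢ ≤ κ` on `[t₀, T]`. -/
theorem statement10 (r μ σ ρ₁ ρ₂ γ α lam T : ℝ) (hT : 0 < T)
    (hσ : σ ≠ 0) (hγ : 0 < γ) (hγ1 : γ ≠ 1) (hα0 : α ≠ 0) (hα1 : α ≠ 1)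
    (hαγ : 0 < α / (1 - γ)) (hsgn : 0 ≤ (1 / α - 1) * (1 - γ))
    (hl0 : 0 < lam) (hl1 : lam < 1) (hρ : ρ₂ ≤ ρ₁) :
    ∃ δ > (0 : ℝ), ∃ κ > (0 : ℝ),
      ∀ t₀ : ℝ, 0 ≤ t₀ → t₀ < T →
      ∀ θ₁ θ₂ : ℝ → ℝ, IsMHJBSolution r μ σ ρ₁ ρ₂ γ α lam t₀ T θ₁ θ₂ →
      ∀ t ∈ Set.Icc t₀ T,
        (δ ≤ θ₁ t ∧ θ₁ t ≤ κ) ∧ (δ ≤ θ₂ t ∧ θ₂ t ≤ κ) :=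
  statement10_general r μ σ ρ₁ ρ₂ γ α lam T hα1 hαγ hsgn hl0 hl1 hρ
end

section
/- Let T > 0 and let r, μ ∈ ℝ, σ ≠ 0, γ > 0 with γ ≠ 1, α ∉ {0,1} with α/(1−γ) > 0 and (1/α − 1)·(1−γ) ≥ 0, 0 < λ < 1, and ρ₁ ≥ ρ₂. Then the Epstein–Zin equilibrium ODE system (M-HJB) on [0,T] admits a unique positive solution (θ₁, θ₂). -/
open Set Filter Topology Real
open scoped NNReal

/-!
In the time-to-maturity variable `s = T - t` the substitution `θᵢ = hᵢ ^ m`, `m = (1 - γ) / α`,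
turns (M-HJB) into an autonomous system `h' = F(h)`, `h(0) = (1, 1)`, whose right-hand side is
`C¹` on the open positive quadrant and depends on the pair `h` only through the ratio `S / D`,
a weighted mean of `h₁` and `h₂`. Because `α < 1`, the functions `e^{-c s}` and `e^{c' s}` are
strict lower and upper barriers for both components, so the solution of the system clamped to a
box (which is globally Lipschitz, hence solvable on `[0, T]` by Picard–Lindelöf) never leaves the
box and solves the original system. Uniqueness is Grönwall's inequality on the compact set swept
out by two positive solutions.
-/

lemma HasDerivWithinAt.fst {E F : Type*} [NormedAddCommGroup E] [NormedSpace ℝ E]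
    [NormedAddCommGroup F] [NormedSpace ℝ F] {f : ℝ → E × F} {f' : E × F} {s : Set ℝ} {x : ℝ}
    (h : HasDerivWithinAt f f' s x) : HasDerivWithinAt (fun y => (f y).1) f'.1 s x :=
  (ContinuousLinearMap.fst ℝ E F).hasFDerivAt.comp_hasDerivWithinAt x h

lemma HasDerivWithinAt.snd {E F : Type*} [NormedAddCommGroup E] [NormedSpace ℝ E]
    [NormedAddCommGroup F] [NormedSpace ℝ F] {f : ℝ → E × F} {f' : E × F} {s : Set ℝ} {x : ℝ}
    (h : HasDerivWithinAt f f' s x) : HasDerivWithinAt (fun y => (f y).2) f'.2 s x :=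
  (ContinuousLinearMap.snd ℝ E F).hasFDerivAt.comp_hasDerivWithinAt x h

lemma HasDerivWithinAt.Ici_of_Icc {E : Type*} [NormedAddCommGroup E] [NormedSpace ℝ E]
    {f : ℝ → E} {f' : E} {a b x : ℝ} (h : HasDerivWithinAt f f' (Icc a b) x) (hx : x ∈ Ico a b) :
    HasDerivWithinAt f f' (Ici x) x :=
  h.mono_of_mem_nhdsWithin (Icc_mem_nhdsGE_of_mem hx)

lemma const_sub_mem_Icc {T t : ℝ} (ht : t ∈ Icc 0 T) : T - t ∈ Icc 0 T :=
  ⟨sub_nonneg.2 ht.2, sub_le_self T ht.1⟩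

lemma HasDerivWithinAt.comp_const_sub_Icc {E : Type*} [NormedAddCommGroup E] [NormedSpace ℝ E]
    {f : ℝ → E} {f' : E} {T t : ℝ} (hf : HasDerivWithinAt f f' (Icc 0 T) (T - t)) :
    HasDerivWithinAt (fun s => f (T - s)) (-f') (Icc 0 T) t := by
  simpa [Function.comp_def] using
    hf.scomp t ((hasDerivAt_id t).const_sub T).hasDerivWithinAt fun _ => const_sub_mem_Icc

lemma hasDerivWithinAt_rpow_comp_const_sub {f : ℝ → ℝ} {f' T t p : ℝ}
    (hf : HasDerivWithinAt f f' (Icc 0 T) (T - t)) (hpos : 0 < f (T - t)) :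
    HasDerivWithinAt (fun s => f (T - s) ^ p) (p * f (T - t) ^ (p - 1) * -f') (Icc 0 T) t :=
  HasDerivAt.comp_hasDerivWithinAt (h := fun s => f (T - s)) t
    (hasDerivAt_rpow_const (Or.inl hpos.ne')) hf.comp_const_sub_Icc

lemma eventually_sub_lt_mul_of_hasDerivWithinAt {H : ℝ → ℝ} {d x r c : ℝ}
    (h : HasDerivWithinAt H d (Ici x) x) (hc : H x ≤ c) (hr : H x = c → d < r) :
    ∀ᶠ z in 𝓝[>] x, H z - c < r * (z - x) := by
  rcases hc.lt_or_eq with hlt | heq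
  · have hcont : Tendsto (fun z => H z - c - r * (z - x)) (𝓝[>] x) (𝓝 (H x - c - r * (x - x))) :=
      ((h.continuousWithinAt.mono Ioi_subset_Ici_self).tendsto.sub_const c).sub
        ((tendsto_id.sub_const x).const_mul r |>.mono_left nhdsWithin_le_nhds)
    have hneg : H x - c - r * (x - x) < 0 := by rwa [sub_self, mul_zero, sub_zero, sub_neg]
    filter_upwards [hcont.eventually_lt_const hneg] with z hz
    linarith
  · have hslope := (hasDerivWithinAt_iff_tendsto_slope' (lt_irrefl x)).1 h.Ioi_of_Ici
    filter_upwards [hslope.eventually_lt_const (hr heq), self_mem_nhdsWithin] with z hz hxz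
    rwa [slope_def_field, div_lt_iff₀ (sub_pos.2 hxz), heq] at hz

lemma eventually_slope_max_lt {H₁ H₂ : ℝ → ℝ} {d₁ d₂ x r : ℝ}
    (h₁ : HasDerivWithinAt H₁ d₁ (Ici x) x) (h₂ : HasDerivWithinAt H₂ d₂ (Ici x) x)
    (hr₁ : H₂ x ≤ H₁ x → d₁ < r) (hr₂ : H₁ x ≤ H₂ x → d₂ < r) :
    ∀ᶠ z in 𝓝[>] x, slope (fun y => max (H₁ y) (H₂ y)) x z < r := by
  filter_upwards [eventually_sub_lt_mul_of_hasDerivWithinAt h₁ (le_max_left _ _)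
      fun h => hr₁ (max_eq_left_iff.1 h.symm),
    eventually_sub_lt_mul_of_hasDerivWithinAt h₂ (le_max_right _ _)
      fun h => hr₂ (max_eq_right_iff.1 h.symm),
    self_mem_nhdsWithin] with z hz₁ hz₂ hxz
  rw [slope_def_field, div_lt_iff₀ (sub_pos.2 hxz), sub_lt_iff_lt_add]
  exact max_lt (by linarith) (by linarith)

theorem max_le_of_hasDerivWithinAt_of_barrier {H₁ H₂ d₁ d₂ B B' : ℝ → ℝ} {a b : ℝ}
    (hd₁ : ∀ x ∈ Icc a b, HasDerivWithinAt H₁ (d₁ x) (Icc a b) x)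
    (hd₂ : ∀ x ∈ Icc a b, HasDerivWithinAt H₂ (d₂ x) (Icc a b) x)
    (hB : ∀ x, HasDerivAt B (B' x) x) (ha₁ : H₁ a ≤ B a) (ha₂ : H₂ a ≤ B a)
    (bound₁ : ∀ x ∈ Ico a b, H₁ x = B x → H₂ x ≤ B x → d₁ x < B' x)
    (bound₂ : ∀ x ∈ Ico a b, H₂ x = B x → H₁ x ≤ B x → d₂ x < B' x) :
    ∀ x ∈ Icc a b, H₁ x ≤ B x ∧ H₂ x ≤ B x := by
  -- `d x` is the derivative of a component attaining the maximum at `x`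
  let d x := max (if H₂ x ≤ H₁ x then d₁ x else d₂ x) (if H₁ x ≤ H₂ x then d₂ x else d₁ x)
  have key := image_le_of_liminf_slope_right_lt_deriv_boundary (f := fun x => max (H₁ x) (H₂ x))
    (f' := d) (ContinuousOn.sup (fun x hx => (hd₁ x hx).continuousWithinAt)
      (fun x hx => (hd₂ x hx).continuousWithinAt))
    (fun x hx r hr => (eventually_slope_max_lt ((hd₁ x (Ico_subset_Icc_self hx)).Ici_of_Icc hx)
      ((hd₂ x (Ico_subset_Icc_self hx)).Ici_of_Icc hx)
      (fun h => lt_of_le_of_lt (by simp only [d, if_pos h]; exact le_max_left _ _) hr)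
      (fun h => lt_of_le_of_lt (by simp only [d, if_pos h]; exact le_max_right _ _) hr)).frequently)
    (max_le ha₁ ha₂) hB ?_
  · exact fun x hx => max_le_iff.1 (key hx)
  intro x hx hxB
  have active₁ (h : H₂ x ≤ H₁ x) : d₁ x < B' x :=
    bound₁ x hx (by rw [← hxB, max_eq_left h]) (by rw [← hxB]; exact le_max_right _ _)
  have active₂ (h : H₁ x ≤ H₂ x) : d₂ x < B' x :=
    bound₂ x hx (by rw [← hxB, max_eq_right h]) (by rw [← hxB]; exact le_max_left _ _)
  refine max_lt ?_ ?_
  · split_ifs with h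
    · exact active₁ h
    · exact active₂ (not_le.1 h).le
  · split_ifs with h
    · exact active₂ h
    · exact active₁ (not_le.1 h).le

theorem exists_forall_mem_Icc_hasDerivWithinAt_of_lipschitzWith {E : Type*}
    [NormedAddCommGroup E] [NormedSpace ℝ E] [CompleteSpace E] {G : E → E} {K L : ℝ≥0}
    (hG : LipschitzWith K G) (hL : ∀ x, ‖G x‖ ≤ L) (x₀ : E) {T : ℝ} (hT : 0 ≤ T) :
    ∃ H : ℝ → E, H 0 = x₀ ∧ ∀ t ∈ Icc 0 T, HasDerivWithinAt H (G (H t)) (Icc 0 T) t :=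
  IsPicardLindelof.exists_eq_forall_mem_Icc_hasDerivWithinAt₀ <|
    .of_time_independent (t₀ := ⟨0, le_rfl, hT⟩) (x₀ := x₀) (a := ⟨L * T, by positivity⟩)
      (r := 0) (fun x _ => hL x) hG.lipschitzOnWith
      (by simp only [sub_zero, sub_self, max_eq_left hT, NNReal.coe_zero]; exact le_rfl)

noncomputable def clampBox (a b : ℝ) (h : a ≤ b) (x : ℝ × ℝ) : ℝ × ℝ :=
  (projIcc a b h x.1, projIcc a b h x.2)

lemma clampBox_mem {a b : ℝ} (h : a ≤ b) (x : ℝ × ℝ) :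
    clampBox a b h x ∈ Icc a b ×ˢ Icc a b :=
  ⟨(projIcc a b h x.1).2, (projIcc a b h x.2).2⟩

lemma clampBox_of_mem {a b : ℝ} (h : a ≤ b) {x : ℝ × ℝ} (hx : x ∈ Icc a b ×ˢ Icc a b) :
    clampBox a b h x = x := by
  simp [clampBox, projIcc_of_mem h hx.1, projIcc_of_mem h hx.2]

lemma lipschitzWith_clampBox {a b : ℝ} (h : a ≤ b) : LipschitzWith 1 (clampBox a b h) := by
  have hc : LipschitzWith 1 (fun y : ℝ => (projIcc a b h y : ℝ)) := by
    simpa [Function.comp_def] using (LipschitzWith.subtype_val _).comp (LipschitzWith.projIcc h)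
  have := (hc.comp LipschitzWith.prod_fst).prodMk (hc.comp LipschitzWith.prod_snd)
  rwa [mul_one, max_self] at this

lemma le_projIcc_of_le {a b c y : ℝ} (h : a ≤ b) (hc : c ∈ Icc a b) (hcy : c ≤ y) :
    c ≤ projIcc a b h y := by
  have := monotone_projIcc h hcy
  rwa [projIcc_of_mem h hc] at this

lemma projIcc_le_of_le {a b c y : ℝ} (h : a ≤ b) (hc : c ∈ Icc a b) (hyc : y ≤ c) :
    (projIcc a b h y : ℝ) ≤ c := by
  have := monotone_projIcc h hyc
  rwa [projIcc_of_mem h hc] at this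

theorem exists_hasDerivWithinAt_mem_Icc_of_barriers {F : ℝ × ℝ → ℝ × ℝ} {a b T : ℝ}
    (hab : a ≤ b) (hT : 0 ≤ T) {K : ℝ≥0} (hF : LipschitzOnWith K F (Icc a b ×ˢ Icc a b))
    {l u l' u' : ℝ → ℝ} (hl : ∀ s, HasDerivAt l (l' s) s) (hu : ∀ s, HasDerivAt u (u' s) s)
    (hl_mem : ∀ s ∈ Icc 0 T, l s ∈ Icc a b) (hu_mem : ∀ s ∈ Icc 0 T, u s ∈ Icc a b)
    {x₀ : ℝ × ℝ} (hx₀ : x₀ ∈ Icc (l 0) (u 0) ×ˢ Icc (l 0) (u 0))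
    (hl₁ : ∀ s ∈ Ico 0 T, ∀ x ∈ Icc a b ×ˢ Icc a b, x.1 = l s → l s ≤ x.2 → l' s < (F x).1)
    (hl₂ : ∀ s ∈ Ico 0 T, ∀ x ∈ Icc a b ×ˢ Icc a b, x.2 = l s → l s ≤ x.1 → l' s < (F x).2)
    (hu₁ : ∀ s ∈ Ico 0 T, ∀ x ∈ Icc a b ×ˢ Icc a b, x.1 = u s → x.2 ≤ u s → (F x).1 < u' s)
    (hu₂ : ∀ s ∈ Ico 0 T, ∀ x ∈ Icc a b ×ˢ Icc a b, x.2 = u s → x.1 ≤ u s → (F x).2 < u' s) :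
    ∃ H : ℝ → ℝ × ℝ, H 0 = x₀ ∧ ∀ s ∈ Icc 0 T,
      HasDerivWithinAt H (F (H s)) (Icc 0 T) s ∧ H s ∈ Icc (l s) (u s) ×ˢ Icc (l s) (u s) := by
  set G := F ∘ clampBox a b hab
  have hG : LipschitzWith (K * 1) G := lipschitzOnWith_univ.1 <|
    hF.comp (lipschitzWith_clampBox hab).lipschitzOnWith fun x _ => clampBox_mem hab x
  obtain ⟨C, hC⟩ := (isCompact_Icc.prod isCompact_Icc).exists_bound_of_continuousOn hF.continuousOn
  obtain ⟨H, hH0, hH⟩ := exists_forall_mem_Icc_hasDerivWithinAt_of_lipschitzWith hG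
    (L := C.toNNReal) (fun x => (hC _ (clampBox_mem hab x)).trans (Real.le_coe_toNNReal C)) x₀ hT
  have hIco {s : ℝ} (hs : s ∈ Ico 0 T) : s ∈ Icc 0 T := Ico_subset_Icc_self hs
  have hup := max_le_of_hasDerivWithinAt_of_barrier (fun s hs => (hH s hs).fst)
    (fun s hs => (hH s hs).snd) hu (hH0 ▸ hx₀.1.2) (hH0 ▸ hx₀.2.2)
    (fun s hs h₁ h₂ => hu₁ s hs _ (clampBox_mem hab _)
      (by simp [clampBox, h₁, projIcc_of_mem hab (hu_mem s (hIco hs))])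
      (projIcc_le_of_le hab (hu_mem s (hIco hs)) h₂))
    (fun s hs h₂ h₁ => hu₂ s hs _ (clampBox_mem hab _)
      (by simp [clampBox, h₂, projIcc_of_mem hab (hu_mem s (hIco hs))])
      (projIcc_le_of_le hab (hu_mem s (hIco hs)) h₁))
  have hlow := max_le_of_hasDerivWithinAt_of_barrier (fun s hs => (hH s hs).fst.neg)
    (fun s hs => (hH s hs).snd.neg) (fun s => (hl s).neg) (by simpa [hH0] using hx₀.1.1)
    (by simpa [hH0] using hx₀.2.1)
    (fun s hs h₁ h₂ => neg_lt_neg <| hl₁ s hs _ (clampBox_mem hab _)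
      (by simp [clampBox, neg_inj.1 h₁, projIcc_of_mem hab (hl_mem s (hIco hs))])
      (le_projIcc_of_le hab (hl_mem s (hIco hs)) (neg_le_neg_iff.1 h₂)))
    (fun s hs h₂ h₁ => neg_lt_neg <| hl₂ s hs _ (clampBox_mem hab _)
      (by simp [clampBox, neg_inj.1 h₂, projIcc_of_mem hab (hl_mem s (hIco hs))])
      (le_projIcc_of_le hab (hl_mem s (hIco hs)) (neg_le_neg_iff.1 h₁)))
  refine ⟨H, hH0, fun s hs => ?_⟩
  have hmem : H s ∈ Icc (l s) (u s) ×ˢ Icc (l s) (u s) :=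
    ⟨⟨neg_le_neg_iff.1 (hlow s hs).1, (hup s hs).1⟩, ⟨neg_le_neg_iff.1 (hlow s hs).2, (hup s hs).2⟩⟩
  have hbox : H s ∈ Icc a b ×ˢ Icc a b :=
    ⟨⟨(hl_mem s hs).1.trans hmem.1.1, hmem.1.2.trans (hu_mem s hs).2⟩,
      ⟨(hl_mem s hs).1.trans hmem.2.1, hmem.2.2.trans (hu_mem s hs).2⟩⟩
  refine ⟨?_, hmem⟩
  simpa [G, clampBox_of_mem hab hbox] using hH s hs

theorem eqOn_Icc_of_locallyLipschitzOn {E : Type*} [NormedAddCommGroup E] [NormedSpace ℝ E]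
    {F : E → E} {U : Set E} (hF : LocallyLipschitzOn U F) {f g : ℝ → E} {T : ℝ}
    (hf : ∀ t ∈ Icc 0 T, HasDerivWithinAt f (F (f t)) (Icc 0 T) t) (hfU : MapsTo f (Icc 0 T) U)
    (hg : ∀ t ∈ Icc 0 T, HasDerivWithinAt g (F (g t)) (Icc 0 T) t) (hgU : MapsTo g (Icc 0 T) U)
    (h0 : f 0 = g 0) : EqOn f g (Icc 0 T) := by
  have hfc : ContinuousOn f (Icc 0 T) := fun t ht => (hf t ht).continuousWithinAt
  have hgc : ContinuousOn g (Icc 0 T) := fun t ht => (hg t ht).continuousWithinAt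
  set C := f '' Icc 0 T ∪ g '' Icc 0 T
  have hC : IsCompact C :=
    (isCompact_Icc.image_of_continuousOn hfc).union (isCompact_Icc.image_of_continuousOn hgc)
  obtain ⟨K, hK⟩ := (hF.mono (union_subset hfU.image_subset hgU.image_subset))
    |>.exists_lipschitzOnWith_of_compact hC
  exact ODE_solution_unique_of_mem_Icc_right (s := fun _ => C) (fun _ _ => hK) hfc
    (fun t ht => (hf t (Ico_subset_Icc_self ht)).Ici_of_Icc ht)
    (fun t ht => Or.inl (mem_image_of_mem f (Ico_subset_Icc_self ht))) hgc
    (fun t ht => (hg t (Ico_subset_Icc_self ht)).Ici_of_Icc ht)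
    (fun t ht => Or.inr (mem_image_of_mem g (Ico_subset_Icc_self ht))) h0

lemma weighted_mean_mem_Icc {w₁ w₂ x₁ x₂ : ℝ} (hw₁ : 0 ≤ w₁) (hw₂ : 0 ≤ w₂) (hw : 0 < w₁ + w₂) :
    (w₁ * x₁ + w₂ * x₂) / (w₁ + w₂) ∈ Icc (min x₁ x₂) (max x₁ x₂) := by
  rw [mem_Icc, le_div_iff₀ hw, div_le_iff₀ hw]
  constructor
  · nlinarith [min_le_left x₁ x₂, min_le_right x₁ x₂]
  · nlinarith [le_max_left x₁ x₂, le_max_right x₁ x₂]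

lemma mul_add_one_sub_mul_pos {lam u v : ℝ} (hl0 : 0 ≤ lam) (hl1 : lam ≤ 1) (hu : 0 < u)
    (hv : 0 < v) : 0 < lam * u + (1 - lam) * v :=
  convex_Ioi (0 : ℝ) hu hv hl0 (sub_nonneg.2 hl1) (add_sub_cancel _ _)

lemma mul_rpow_rpow_inv_sub_one_mul {z m : ℝ} (hz : 0 < z) (hm : m ≠ 0) :
    m * (z ^ m⁻¹) ^ (m - 1) * (m⁻¹ * z ^ (m⁻¹ - 1)) = 1 := by
  rw [← rpow_mul hz.le, mul_mul_mul_comm, mul_inv_cancel₀ hm, one_mul, ← rpow_add hz]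
  convert rpow_zero z using 2
  field_simp
  ring

namespace EpsteinZin

/-- In the variables `xᵢ = θᵢ ^ (1 / m)` with `m = (1 - γ) / α` one has `θᵢ ^ β = xᵢ ^ (m - 1)`,
so `ratio lam m x = S / D` and `C = (S / D) ^ (1 / (α - 1))`; (M-HJB) becomes
`xᵢ' + (field x)ᵢ = 0` (see `mhjbResidual_eq`). -/
noncomputable def ratio (lam m : ℝ) (x : ℝ × ℝ) : ℝ :=
  (lam * x.1 ^ m + (1 - lam) * x.2 ^ m) / (lam * x.1 ^ (m - 1) + (1 - lam) * x.2 ^ (m - 1))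

noncomputable def rate (A ρ α p y : ℝ) : ℝ :=
  (α * A - ρ - α * p ^ (1 / (α - 1))) * y + p ^ (α / (α - 1))

noncomputable def field (A ρ₁ ρ₂ α lam m : ℝ) (x : ℝ × ℝ) : ℝ × ℝ :=
  (rate A ρ₁ α (ratio lam m x) x.1, rate A ρ₂ α (ratio lam m x) x.2)

/-- Time `s` is time to maturity `T - t`, so the initial value is the terminal condition. -/
def IsPositiveSolution (F : ℝ × ℝ → ℝ × ℝ) (T : ℝ) (h : ℝ → ℝ × ℝ) : Prop :=
  h 0 = (1, 1) ∧ ∀ s ∈ Icc 0 T, HasDerivWithinAt h (F (h s)) (Icc 0 T) s ∧ h s ∈ Ioi 0 ×ˢ Ioi 0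

noncomputable def mertonRate (r μ σ γ : ℝ) : ℝ := r + (μ - r) ^ 2 / (2 * γ * σ ^ 2)

noncomputable def mhjbResidual (r μ σ ρ γ α lam : ℝ) (θ₁ θ₂ θ : ℝ → ℝ) (dθ t : ℝ) : ℝ :=
  dθ + (1 - γ) * θ t * (mertonRate r μ σ γ - mhjbC γ α lam θ₁ θ₂ t)
    - (1 - γ) * ρ * α⁻¹ * θ t
    + α⁻¹ * (1 - γ) * θ t ^ ((1 - γ - α) / (1 - γ))
      * mhjbS lam θ₁ θ₂ t ^ (α / (α - 1)) * mhjbD γ α lam θ₁ θ₂ t ^ (-(α / (α - 1)))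

lemma lt_one_of_div_pos_of_mul_nonneg {α γ : ℝ} (hα1 : α ≠ 1) (hαγ : 0 < α / (1 - γ))
    (hsgn : 0 ≤ (1 / α - 1) * (1 - γ)) : α < 1 := by
  refine lt_of_le_of_ne (not_lt.1 fun h => ?_) hα1
  have hγ : 0 < 1 - γ := (div_pos_iff_of_pos_left (by linarith)).1 hαγ
  have hα : 1 / α - 1 < 0 := by rw [sub_neg, div_lt_one (by linarith)]; exact h
  nlinarith

section

variable {A ρ ρ₁ ρ₂ α lam m T : ℝ}

lemma ratio_mem_Icc (hl0 : 0 ≤ lam) (hl1 : lam ≤ 1) {x : ℝ × ℝ} (hx : x ∈ Ioi 0 ×ˢ Ioi 0) :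
    ratio lam m x ∈ Icc (min x.1 x.2) (max x.1 x.2) := by
  have hsplit {z : ℝ} (hz : 0 < z) : z ^ m = z ^ (m - 1) * z := by
    rw [← rpow_add_one hz.ne', sub_add_cancel]
  have hw₁ : 0 ≤ lam * x.1 ^ (m - 1) := mul_nonneg hl0 (rpow_pos_of_pos hx.1 _).le
  have hw₂ : 0 ≤ (1 - lam) * x.2 ^ (m - 1) :=
    mul_nonneg (sub_nonneg.2 hl1) (rpow_pos_of_pos hx.2 _).le
  have := weighted_mean_mem_Icc hw₁ hw₂
    (mul_add_one_sub_mul_pos hl0 hl1 (rpow_pos_of_pos hx.1 _) (rpow_pos_of_pos hx.2 _))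
    (x₁ := x.1) (x₂ := x.2)
  rwa [ratio, hsplit hx.1, hsplit hx.2, ← mul_assoc, ← mul_assoc]

lemma ratio_pos (hl0 : 0 ≤ lam) (hl1 : lam ≤ 1) {x : ℝ × ℝ} (hx : x ∈ Ioi 0 ×ˢ Ioi 0) :
    0 < ratio lam m x :=
  (lt_min hx.1 hx.2).trans_le (ratio_mem_Icc hl0 hl1 hx).1

lemma contDiffOn_field (hl0 : 0 ≤ lam) (hl1 : lam ≤ 1) :
    ContDiffOn ℝ 1 (field A ρ₁ ρ₂ α lam m) (Ioi 0 ×ˢ Ioi 0) := by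
  intro x hx
  have hpow (e : ℝ) : ContDiffAt ℝ 1 (fun y : ℝ × ℝ => lam * y.1 ^ e + (1 - lam) * y.2 ^ e) x :=
    (contDiffAt_const.mul (contDiffAt_fst.rpow_const_of_ne hx.1.ne')).add
      (contDiffAt_const.mul (contDiffAt_snd.rpow_const_of_ne hx.2.ne'))
  have hP : ContDiffAt ℝ 1 (ratio lam m) x := (hpow m).div (hpow (m - 1))
    (mul_add_one_sub_mul_pos hl0 hl1 (rpow_pos_of_pos hx.1 _) (rpow_pos_of_pos hx.2 _)).ne'
  have hPe (e : ℝ) : ContDiffAt ℝ 1 (fun y => ratio lam m y ^ e) x :=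
    hP.rpow_const_of_ne (ratio_pos hl0 hl1 hx).ne'
  have hrate (ρ : ℝ) {g : ℝ × ℝ → ℝ} (hg : ContDiffAt ℝ 1 g x) :
      ContDiffAt ℝ 1 (fun y => rate A ρ α (ratio lam m y) (g y)) x :=
    ((contDiffAt_const.sub (contDiffAt_const.mul (hPe _))).mul hg).add (hPe _)
  exact ((hrate ρ₁ contDiffAt_fst).prodMk (hrate ρ₂ contDiffAt_snd)).contDiffWithinAt

lemma rate_eq (hα : α ≠ 1) {p : ℝ} (hp : 0 < p) (y : ℝ) :
    rate A ρ α p y = (α * A - ρ) * y + p ^ (1 / (α - 1)) * (p - α * y) := by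
  have hexp : α / (α - 1) = 1 / (α - 1) + 1 := by
    field_simp [sub_ne_zero.2 hα]
    ring
  rw [rate, hexp, rpow_add_one hp.ne']
  ring

lemma neg_mul_lt_rate (hα : α < 1) {c p y : ℝ} (hc : |α * A - ρ| ≤ c) (hy : 0 < y)
    (hyp : y ≤ p) : -c * y < rate A ρ α p y := by
  have hp : 0 < p := hy.trans_le hyp
  rw [rate_eq hα.ne hp]
  have h₁ : -c * y ≤ (α * A - ρ) * y := mul_le_mul_of_nonneg_right (neg_le_of_abs_le hc) hy.le
  have h₂ : 0 < p ^ (1 / (α - 1)) * (p - α * y) :=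
    mul_pos (rpow_pos_of_pos hp _) (by nlinarith [mul_lt_of_lt_one_left hy hα])
  linarith

lemma rate_lt_mul (hα : α < 1) {a c p y : ℝ} (hc : |α * A - ρ| ≤ c) (ha : 0 < a) (hap : a ≤ p)
    (hpy : p ≤ y) : rate A ρ α p y < (c + (1 + |α|) * a ^ (1 / (α - 1)) + 1) * y := by
  have hp : 0 < p := ha.trans_le hap
  have hy : 0 < y := hp.trans_le hpy
  rw [rate_eq hα.ne hp]
  have h₁ : (α * A - ρ) * y ≤ c * y := mul_le_mul_of_nonneg_right ((le_abs_self _).trans hc) hy.le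
  have hq : p ^ (1 / (α - 1)) ≤ a ^ (1 / (α - 1)) :=
    rpow_le_rpow_of_nonpos ha hap (one_div_neg.2 (sub_neg.2 hα)).le
  have h₂ : p ^ (1 / (α - 1)) * (p - α * y) ≤ a ^ (1 / (α - 1)) * ((1 + |α|) * y) :=
    calc p ^ (1 / (α - 1)) * (p - α * y)
        ≤ p ^ (1 / (α - 1)) * ((1 + |α|) * y) := by
          gcongr
          nlinarith [neg_abs_le α]
      _ ≤ a ^ (1 / (α - 1)) * ((1 + |α|) * y) := by gcongr
  nlinarith

lemma neg_mul_lt_field (hα : α < 1) (hl0 : 0 ≤ lam) (hl1 : lam ≤ 1) {c : ℝ}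
    (hc₁ : |α * A - ρ₁| ≤ c) (hc₂ : |α * A - ρ₂| ≤ c) {x : ℝ × ℝ} (hx : x ∈ Ioi 0 ×ˢ Ioi 0)
    {y : ℝ} :
    (x.1 = y → y ≤ x.2 → -c * y < (field A ρ₁ ρ₂ α lam m x).1) ∧
      (x.2 = y → y ≤ x.1 → -c * y < (field A ρ₁ ρ₂ α lam m x).2) := by
  constructor <;> rintro rfl h
  · exact neg_mul_lt_rate hα hc₁ hx.1 ((le_min le_rfl h).trans (ratio_mem_Icc hl0 hl1 hx).1)
  · exact neg_mul_lt_rate hα hc₂ hx.2 ((le_min h le_rfl).trans (ratio_mem_Icc hl0 hl1 hx).1)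

lemma field_lt_mul (hα : α < 1) (hl0 : 0 ≤ lam) (hl1 : lam ≤ 1) {a c : ℝ}
    (hc₁ : |α * A - ρ₁| ≤ c) (hc₂ : |α * A - ρ₂| ≤ c) (ha : 0 < a) {x : ℝ × ℝ}
    (hx : x ∈ Ici a ×ˢ Ici a) {y : ℝ} :
    (x.1 = y → x.2 ≤ y →
        (field A ρ₁ ρ₂ α lam m x).1 < (c + (1 + |α|) * a ^ (1 / (α - 1)) + 1) * y) ∧
      (x.2 = y → x.1 ≤ y →
        (field A ρ₁ ρ₂ α lam m x).2 < (c + (1 + |α|) * a ^ (1 / (α - 1)) + 1) * y) := by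
  have hx' : x ∈ Ioi 0 ×ˢ Ioi 0 := ⟨ha.trans_le hx.1, ha.trans_le hx.2⟩
  have ha_le : a ≤ ratio lam m x := (le_min hx.1 hx.2).trans (ratio_mem_Icc hl0 hl1 hx').1
  constructor <;> rintro rfl h
  · exact rate_lt_mul hα hc₁ ha ha_le ((ratio_mem_Icc hl0 hl1 hx').2.trans (max_le le_rfl h))
  · exact rate_lt_mul hα hc₂ ha ha_le ((ratio_mem_Icc hl0 hl1 hx').2.trans (max_le h le_rfl))

variable (A ρ₁ ρ₂ α lam m) in
theorem exists_isPositiveSolution (hα : α < 1) (hl0 : 0 ≤ lam) (hl1 : lam ≤ 1) (hT : 0 ≤ T) :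
    ∃ h, IsPositiveSolution (field A ρ₁ ρ₂ α lam m) T h := by
  set c := max |α * A - ρ₁| |α * A - ρ₂|
  set a := exp (-(c * T))
  set c' := c + (1 + |α|) * a ^ (1 / (α - 1)) + 1
  set b := exp (c' * T)
  have hc₁ : |α * A - ρ₁| ≤ c := le_max_left _ _
  have hc₂ : |α * A - ρ₂| ≤ c := le_max_right _ _
  have hc : 0 ≤ c := (abs_nonneg _).trans hc₁
  have hc' : 0 ≤ c' := by positivity
  have hl_mem (s : ℝ) (hs : s ∈ Icc 0 T) : exp (-(c * s)) ∈ Icc a b :=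
    ⟨exp_le_exp.2 (by nlinarith [hs.2]),
      (exp_le_one_iff.2 (by nlinarith [hs.1])).trans (one_le_exp (by positivity))⟩
  have hu_mem (s : ℝ) (hs : s ∈ Icc 0 T) : exp (c' * s) ∈ Icc a b :=
    ⟨(exp_le_one_iff.2 (by nlinarith)).trans (one_le_exp (by nlinarith [hs.1])),
      exp_le_exp.2 (by nlinarith [hs.2])⟩
  have hbox : Icc a b ×ˢ Icc a b ⊆ Ioi 0 ×ˢ Ioi 0 := fun x hx =>
    ⟨(exp_pos _).trans_le hx.1.1, (exp_pos _).trans_le hx.2.1⟩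
  have hab : a ≤ b := (hl_mem 0 ⟨le_rfl, hT⟩).1.trans (hl_mem 0 ⟨le_rfl, hT⟩).2
  obtain ⟨K, hK⟩ := ((contDiffOn_field hl0 hl1).locallyLipschitzOn
    ((convex_Ioi 0).prod (convex_Ioi 0)) |>.mono hbox).exists_lipschitzOnWith_of_compact
    (isCompact_Icc.prod isCompact_Icc)
  obtain ⟨h, h0, hh⟩ := exists_hasDerivWithinAt_mem_Icc_of_barriers (x₀ := (1, 1)) hab hT hK
    (l := fun s => exp (-(c * s))) (l' := fun s => -c * exp (-(c * s)))
    (u := fun s => exp (c' * s)) (u' := fun s => c' * exp (c' * s))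
    (fun s => by simpa [mul_comm] using ((hasDerivAt_id s).const_mul c).neg.exp)
    (fun s => by simpa [mul_comm] using ((hasDerivAt_id s).const_mul c').exp) hl_mem hu_mem
    (by simp)
    (fun _ _ x hx => (neg_mul_lt_field hα hl0 hl1 hc₁ hc₂ (hbox hx)).1)
    (fun _ _ x hx => (neg_mul_lt_field hα hl0 hl1 hc₁ hc₂ (hbox hx)).2)
    (fun _ _ x hx => (field_lt_mul hα hl0 hl1 hc₁ hc₂ (exp_pos _) ⟨hx.1.1, hx.2.1⟩).1)
    (fun _ _ x hx => (field_lt_mul hα hl0 hl1 hc₁ hc₂ (exp_pos _) ⟨hx.1.1, hx.2.1⟩).2)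
  exact ⟨h, h0, fun s hs => ⟨(hh s hs).1,
    (exp_pos _).trans_le (hh s hs).2.1.1, (exp_pos _).trans_le (hh s hs).2.2.1⟩⟩

theorem IsPositiveSolution.eqOn (hl0 : 0 ≤ lam) (hl1 : lam ≤ 1) {f g : ℝ → ℝ × ℝ}
    (hf : IsPositiveSolution (field A ρ₁ ρ₂ α lam m) T f)
    (hg : IsPositiveSolution (field A ρ₁ ρ₂ α lam m) T g) : EqOn f g (Icc 0 T) :=
  eqOn_Icc_of_locallyLipschitzOn
    ((contDiffOn_field hl0 hl1).locallyLipschitzOn ((convex_Ioi 0).prod (convex_Ioi 0)))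
    (fun t ht => (hf.2 t ht).1) (fun t ht => (hf.2 t ht).2) (fun t ht => (hg.2 t ht).1)
    (fun t ht => (hg.2 t ht).2) (hf.1.trans hg.1.symm)

end

section

variable {r μ σ ρ ρ₁ ρ₂ γ α lam T : ℝ}

theorem mhjbResidual_eq (hα0 : α ≠ 0) (hγ1 : γ ≠ 1) (hl0 : 0 ≤ lam) (hl1 : lam ≤ 1)
    {θ₁ θ₂ θ : ℝ → ℝ} {t y d : ℝ} {x : ℝ × ℝ} (hx : x ∈ Ioi 0 ×ˢ Ioi 0) (hy : 0 < y)
    (h₁ : θ₁ t = x.1 ^ ((1 - γ) / α)) (h₂ : θ₂ t = x.2 ^ ((1 - γ) / α))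
    (h : θ t = y ^ ((1 - γ) / α)) :
    mhjbResidual r μ σ ρ γ α lam θ₁ θ₂ θ ((1 - γ) / α * y ^ ((1 - γ) / α - 1) * d) t
      = (1 - γ) / α * y ^ ((1 - γ) / α - 1) *
        (d + rate (mertonRate r μ σ γ) ρ α (ratio lam ((1 - γ) / α) x) y) := by
  set m := (1 - γ) / α
  have hγ1' : 1 - γ ≠ 0 := sub_ne_zero.2 hγ1.symm
  have hβ {z : ℝ} (hz : 0 < z) : (z ^ m) ^ ((1 - γ - α) / (1 - γ)) = z ^ (m - 1) := by
    rw [← rpow_mul hz.le]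
    congr 1
    simp only [m]
    field_simp
  have hS : mhjbS lam θ₁ θ₂ t = lam * x.1 ^ m + (1 - lam) * x.2 ^ m := by rw [mhjbS, h₁, h₂]
  have hD : mhjbD γ α lam θ₁ θ₂ t = lam * x.1 ^ (m - 1) + (1 - lam) * x.2 ^ (m - 1) := by
    rw [mhjbD, h₁, h₂, hβ hx.1, hβ hx.2]
  have hSD (e : ℝ) : mhjbS lam θ₁ θ₂ t ^ e * mhjbD γ α lam θ₁ θ₂ t ^ (-e) = ratio lam m x ^ e := by
    have hDpos := mul_add_one_sub_mul_pos hl0 hl1 (rpow_pos_of_pos hx.1 (m - 1))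
      (rpow_pos_of_pos hx.2 (m - 1))
    have hSpos := mul_add_one_sub_mul_pos hl0 hl1 (rpow_pos_of_pos hx.1 m)
      (rpow_pos_of_pos hx.2 m)
    rw [hS, hD, ratio, div_rpow hSpos.le hDpos.le, rpow_neg hDpos.le, div_eq_mul_inv]
  have hym : y ^ m = y ^ (m - 1) * y := by rw [← rpow_add_one hy.ne', sub_add_cancel]
  rw [mhjbResidual, mhjbC, hSD, mul_assoc _ (mhjbS _ _ _ _ ^ _), hSD, h, hβ hy, hym, rate]
  simp only [m]
  field_simp
  ring

theorem isMHJBSolution_of_isPositiveSolution (hα0 : α ≠ 0) (hγ1 : γ ≠ 1) (hl0 : 0 ≤ lam)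
    (hl1 : lam ≤ 1) {h : ℝ → ℝ × ℝ}
    (hh : IsPositiveSolution (field (mertonRate r μ σ γ) ρ₁ ρ₂ α lam ((1 - γ) / α)) T h) :
    IsMHJBSolution r μ σ ρ₁ ρ₂ γ α lam 0 T (fun t => (h (T - t)).1 ^ ((1 - γ) / α))
      (fun t => (h (T - t)).2 ^ ((1 - γ) / α)) := by
  set m := (1 - γ) / α
  set F := field (mertonRate r μ σ γ) ρ₁ ρ₂ α lam m
  obtain ⟨h0, hh⟩ := hh
  have hd {t : ℝ} (ht : t ∈ Icc 0 T) := (hh _ (const_sub_mem_Icc ht)).1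
  have hpos {t : ℝ} (ht : t ∈ Icc 0 T) := (hh _ (const_sub_mem_Icc ht)).2
  have hc : ContinuousOn (fun t => h (T - t)) (Icc 0 T) := fun t ht =>
    (hd ht).continuousWithinAt.comp (continuous_const.sub continuous_id).continuousWithinAt
      fun _ => const_sub_mem_Icc
  have hcF : ContinuousOn (fun t => F (h (T - t))) (Icc 0 T) :=
    (contDiffOn_field hl0 hl1).continuousOn.comp hc fun t ht => hpos ht
  set θ₁ := fun t => (h (T - t)).1 ^ m
  set θ₂ := fun t => (h (T - t)).2 ^ m
  refine ⟨fun t => m * (h (T - t)).1 ^ (m - 1) * -(F (h (T - t))).1,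
    fun t => m * (h (T - t)).2 ^ (m - 1) * -(F (h (T - t))).2,
    (continuousOn_const.mul (hc.fst.rpow_const fun t ht => Or.inl (hpos ht).1.ne')).mul hcF.fst.neg,
    (continuousOn_const.mul (hc.snd.rpow_const fun t ht => Or.inl (hpos ht).2.ne')).mul hcF.snd.neg,
    fun t ht => hasDerivWithinAt_rpow_comp_const_sub (hd ht).fst (hpos ht).1,
    fun t ht => hasDerivWithinAt_rpow_comp_const_sub (hd ht).snd (hpos ht).2,
    fun t ht => rpow_pos_of_pos (hpos ht).1 _, fun t ht => rpow_pos_of_pos (hpos ht).2 _,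
    by simp [θ₁, h0], by simp [θ₂, h0], fun t ht => ?_, fun t ht => ?_⟩
  · refine (mhjbResidual_eq (θ₁ := θ₁) (θ₂ := θ₂) (θ := θ₁) (t := t) hα0 hγ1 hl0 hl1 (hpos ht)
      (hpos ht).1 rfl rfl rfl).trans ?_
    simp [F, field, m]
  · refine (mhjbResidual_eq (θ₁ := θ₁) (θ₂ := θ₂) (θ := θ₂) (t := t) hα0 hγ1 hl0 hl1 (hpos ht)
      (hpos ht).2 rfl rfl rfl).trans ?_
    simp [F, field, m]

theorem rate_eq_of_mhjbResidual_eq_zero (hα0 : α ≠ 0) (hγ1 : γ ≠ 1) (hl0 : 0 ≤ lam)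
    (hl1 : lam ≤ 1) {θ₁ θ₂ θ : ℝ → ℝ} {t dθ : ℝ} (h₁ : 0 < θ₁ t) (h₂ : 0 < θ₂ t) (h : 0 < θ t)
    (hres : mhjbResidual r μ σ ρ γ α lam θ₁ θ₂ θ dθ t = 0) :
    rate (mertonRate r μ σ γ) ρ α
        (ratio lam ((1 - γ) / α) (θ₁ t ^ ((1 - γ) / α)⁻¹, θ₂ t ^ ((1 - γ) / α)⁻¹))
        (θ t ^ ((1 - γ) / α)⁻¹)
      = ((1 - γ) / α)⁻¹ * θ t ^ (((1 - γ) / α)⁻¹ - 1) * -dθ := by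
  set m := (1 - γ) / α
  have hm : m ≠ 0 := div_ne_zero (sub_ne_zero.2 hγ1.symm) hα0
  set y := θ t ^ m⁻¹
  have hy : 0 < y := rpow_pos_of_pos h _
  have hdθ : dθ = m * y ^ (m - 1) * (m⁻¹ * θ t ^ (m⁻¹ - 1) * dθ) := by
    rw [← mul_assoc, mul_rpow_rpow_inv_sub_one_mul h hm, one_mul]
  rw [hdθ, mhjbResidual_eq hα0 hγ1 hl0 hl1 (x := (θ₁ t ^ m⁻¹, θ₂ t ^ m⁻¹))
    ⟨rpow_pos_of_pos h₁ _, rpow_pos_of_pos h₂ _⟩ hy (rpow_inv_rpow h₁.le hm).symm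
    (rpow_inv_rpow h₂.le hm).symm (rpow_inv_rpow h.le hm).symm] at hres
  have := (mul_eq_zero.1 hres).resolve_left (mul_ne_zero hm (rpow_pos_of_pos hy _).ne')
  linarith

theorem isPositiveSolution_of_isMHJBSolution (hα0 : α ≠ 0) (hγ1 : γ ≠ 1) (hl0 : 0 ≤ lam)
    (hl1 : lam ≤ 1) {φ₁ φ₂ : ℝ → ℝ} (hφ : IsMHJBSolution r μ σ ρ₁ ρ₂ γ α lam 0 T φ₁ φ₂) :
    IsPositiveSolution (field (mertonRate r μ σ γ) ρ₁ ρ₂ α lam ((1 - γ) / α)) T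
      (fun s => (φ₁ (T - s) ^ ((1 - γ) / α)⁻¹, φ₂ (T - s) ^ ((1 - γ) / α)⁻¹)) := by
  obtain ⟨φ₁', φ₂', -, -, hd₁, hd₂, hp₁, hp₂, hT₁, hT₂, he₁, he₂⟩ := hφ
  refine ⟨by simp [hT₁, hT₂], fun s hs => ?_⟩
  have ht := const_sub_mem_Icc hs
  refine ⟨?_, rpow_pos_of_pos (hp₁ _ ht) _, rpow_pos_of_pos (hp₂ _ ht) _⟩
  convert (hasDerivWithinAt_rpow_comp_const_sub (hd₁ _ ht) (hp₁ _ ht)).prodMk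
    (hasDerivWithinAt_rpow_comp_const_sub (hd₂ _ ht) (hp₂ _ ht)) using 1
  exact Prod.ext
    (rate_eq_of_mhjbResidual_eq_zero hα0 hγ1 hl0 hl1 (hp₁ _ ht) (hp₂ _ ht) (hp₁ _ ht) (he₁ _ ht))
    (rate_eq_of_mhjbResidual_eq_zero hα0 hγ1 hl0 hl1 (hp₁ _ ht) (hp₂ _ ht) (hp₂ _ ht) (he₂ _ ht))

theorem eqOn_of_isMHJBSolution (hα0 : α ≠ 0) (hγ1 : γ ≠ 1) (hl0 : 0 ≤ lam) (hl1 : lam ≤ 1)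
    {h : ℝ → ℝ × ℝ}
    (hh : IsPositiveSolution (field (mertonRate r μ σ γ) ρ₁ ρ₂ α lam ((1 - γ) / α)) T h)
    {φ₁ φ₂ : ℝ → ℝ} (hφ : IsMHJBSolution r μ σ ρ₁ ρ₂ γ α lam 0 T φ₁ φ₂) :
    EqOn φ₁ (fun t => (h (T - t)).1 ^ ((1 - γ) / α)) (Icc 0 T) ∧
      EqOn φ₂ (fun t => (h (T - t)).2 ^ ((1 - γ) / α)) (Icc 0 T) := by
  have hm : (1 - γ) / α ≠ 0 := div_ne_zero (sub_ne_zero.2 hγ1.symm) hα0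
  have heq := (isPositiveSolution_of_isMHJBSolution hα0 hγ1 hl0 hl1 hφ).eqOn hl0 hl1 hh
  obtain ⟨-, -, -, -, -, -, hp₁, hp₂, -⟩ := hφ
  refine ⟨fun t ht => ?_, fun t ht => ?_⟩
  · simp only [← heq (const_sub_mem_Icc ht), sub_sub_cancel, rpow_inv_rpow (hp₁ t ht).le hm]
  · simp only [← heq (const_sub_mem_Icc ht), sub_sub_cancel, rpow_inv_rpow (hp₂ t ht).le hm]

end

end EpsteinZin

theorem statement11_general (r μ σ ρ₁ ρ₂ γ α lam T : ℝ) (hT : 0 < T)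
    (hγ1 : γ ≠ 1) (hα0 : α ≠ 0) (hα1 : α ≠ 1)
    (hαγ : 0 < α / (1 - γ)) (hsgn : 0 ≤ (1 / α - 1) * (1 - γ))
    (hl0 : 0 < lam) (hl1 : lam < 1) :
    ∃ θ₁ θ₂ : ℝ → ℝ,
      IsMHJBSolution r μ σ ρ₁ ρ₂ γ α lam 0 T θ₁ θ₂ ∧
      ∀ φ₁ φ₂ : ℝ → ℝ, IsMHJBSolution r μ σ ρ₁ ρ₂ γ α lam 0 T φ₁ φ₂ →
        Set.EqOn φ₁ θ₁ (Set.Icc 0 T) ∧ Set.EqOn φ₂ θ₂ (Set.Icc 0 T) := by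
  have hα := EpsteinZin.lt_one_of_div_pos_of_mul_nonneg hα1 hαγ hsgn
  obtain ⟨h, hh⟩ := EpsteinZin.exists_isPositiveSolution (EpsteinZin.mertonRate r μ σ γ) ρ₁ ρ₂ α
    lam ((1 - γ) / α) hα hl0.le hl1.le hT.le
  exact ⟨_, _, EpsteinZin.isMHJBSolution_of_isPositiveSolution hα0 hγ1 hl0.le hl1.le hh,
    fun φ₁ φ₂ hφ => EpsteinZin.eqOn_of_isMHJBSolution hα0 hγ1 hl0.le hl1.le hh hφ⟩

/-- Proposition of Section 5.2 (well-posedness): the Epstein–Zin equilibrium ODE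
system (M-HJB) on `[0, T]` admits a unique positive solution `(θ₁, θ₂)`
(uniqueness up to equality on `[0, T]`). -/
theorem statement11 (r μ σ ρ₁ ρ₂ γ α lam T : ℝ) (hT : 0 < T)
    (hσ : σ ≠ 0) (hγ : 0 < γ) (hγ1 : γ ≠ 1) (hα0 : α ≠ 0) (hα1 : α ≠ 1)
    (hαγ : 0 < α / (1 - γ)) (hsgn : 0 ≤ (1 / α - 1) * (1 - γ))
    (hl0 : 0 < lam) (hl1 : lam < 1) (hρ : ρ₂ ≤ ρ₁) :
    ∃ θ₁ θ₂ : ℝ → ℝ,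
      IsMHJBSolution r μ σ ρ₁ ρ₂ γ α lam 0 T θ₁ θ₂ ∧
      ∀ φ₁ φ₂ : ℝ → ℝ, IsMHJBSolution r μ σ ρ₁ ρ₂ γ α lam 0 T φ₁ φ₂ →
        Set.EqOn φ₁ θ₁ (Set.Icc 0 T) ∧ Set.EqOn φ₂ θ₂ (Set.Icc 0 T) :=
  statement11_general r μ σ ρ₁ ρ₂ γ α lam T hT hγ1 hα0 hα1 hαγ hsgn hl0 hl1
end

section
/- Let n, ℓ ≥ 1, T > 0, let A, C, Q : [0,T] → ℝ^{n×n}, B, D : [0,T] → ℝ^{n×ℓ}, R : [0,T] → ℝ^{ℓ×ℓ} be given, and let G₁, G₂ ∈ ℝ^{n×n}. Suppose Φ₁, Φ₂, Φ₆ : [0,T] → ℝ^{n×n} are differentiable, Dᵀ(t)Φ₁(t)D(t) + R(t) is invertible for every t, and, with Ψ̄(t) := −(Dᵀ Φ₁ D + R)⁻¹ (Dᵀ Φ₁ C + Bᵀ Φ₁ + Bᵀ Φ₆ᵀ Φ₂ Φ₆)(t), the system (Ri-LQ1-S) holds on [0,T]: Φ̇₁ + Φ₁(A + BΨ̄) +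 (A + BΨ̄)ᵀΦ₁ + (C + DΨ̄)ᵀΦ₁(C + DΨ̄) + Q + Ψ̄ᵀRΨ̄ = 0, Φ̇₂ = 0, Φ̇₆ + Φ₆(A + BΨ̄) = 0, with Φ₁(T) = G₁, Φ₂(T) = G₂, Φ₆(T) = Iₙ. Define Φ := Φ₁ and Φ̂ := Φ₁ + Φ₆ᵀ Φ₂ Φ₆. Then Φ̂(T) = G₁ + G₂, Ψ̄(t) = −(DᵀΦD + R)⁻¹(DᵀΦC + BᵀΦ̂)(t) for all t, and (Φ, Φ̂) satisfies the system (Ri-LQ2-S): Φ̇ + Φ(A + BΨ̄) + (A + BΨ̄)ᵀΦ + (C + DΨ̄)ᵀΦ(C + DΨ̄) + Q + Ψ̄ᵀRΨ̄ = 0 and Φ̇̂ + Φ̂(A + BΨ̄) + (A + BΨ̄)ᵀΦ̂ + (C + DΨ̄)ᵀΦ(C + DΨ̄) + Q + Ψ̄ᵀRΨ̄ = 0 on [0,T]. -/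
open Matrix

attribute [local instance] Matrix.normedAddCommGroup Matrix.normedSpace

/-! Since `Φ₂` is constant and `Φ₆' = -Φ₆ (A + BΨ̄)`, the matrix `Φ₆ᵀ Φ₂ Φ₆` solves the Lyapunov
equation `P' + P (A + BΨ̄) + (A + BΨ̄)ᵀ P = 0`. Adding it to the Riccati equation for `Φ₁`
therefore only replaces `Φ₁` by `Φ̂` in the two linear terms, which is the second equation of
(Ri-LQ2-S); the first one is the equation for `Φ₁` itself. -/

section MatrixDerivative

variable {𝕜 : Type*} [NontriviallyNormedField 𝕜] {m n o : Type*} [Fintype n] {s : Set 𝕜} {x : 𝕜}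

theorem hasDerivWithinAt_matrix_iff {f : 𝕜 → Matrix m n 𝕜} {f' : Matrix m n 𝕜} :
    HasDerivWithinAt f f' s x ↔ ∀ i j, HasDerivWithinAt (fun t => f t i j) (f' i j) s x :=
  hasDerivWithinAt_pi.trans <| forall_congr' fun _ => hasDerivWithinAt_pi

theorem HasDerivWithinAt.matrix_transpose [Fintype m] {f : 𝕜 → Matrix m n 𝕜} {f' : Matrix m n 𝕜}
    (hf : HasDerivWithinAt f f' s x) : HasDerivWithinAt (fun t => (f t)ᵀ) f'ᵀ s x :=
  hasDerivWithinAt_matrix_iff.2 fun i j => hasDerivWithinAt_matrix_iff.1 hf j i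

theorem HasDerivWithinAt.matrix_mul [Fintype m] [Fintype o] {f : 𝕜 → Matrix m n 𝕜}
    {g : 𝕜 → Matrix n o 𝕜} {f' : Matrix m n 𝕜} {g' : Matrix n o 𝕜}
    (hf : HasDerivWithinAt f f' s x) (hg : HasDerivWithinAt g g' s x) :
    HasDerivWithinAt (fun t => f t * g t) (f' * g x + f x * g') s x := by
  rw [hasDerivWithinAt_matrix_iff] at hf hg ⊢
  intro i j
  simp only [mul_apply, Matrix.add_apply, ← Finset.sum_add_distrib]
  exact HasDerivWithinAt.fun_sum fun k _ => (hf i k).fun_mul (hg k j)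

theorem HasDerivWithinAt.transpose_mul_mul_of_eq_neg_mul {X Y : 𝕜 → Matrix n n 𝕜}
    {X' M : Matrix n n 𝕜} (hX : HasDerivWithinAt X X' s x) (hY : HasDerivWithinAt Y 0 s x)
    (hX' : X' = -(X x * M)) :
    HasDerivWithinAt (fun t => (X t)ᵀ * Y t * X t)
      (-((X x)ᵀ * Y x * X x * M + Mᵀ * ((X x)ᵀ * Y x * X x))) s x := by
  refine ((hX.matrix_transpose.matrix_mul hY).matrix_mul hX).congr_deriv ?_
  rw [hX', transpose_neg, transpose_mul]
  noncomm_ring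

end MatrixDerivative

theorem statement12_general (n l : ℕ) (T : ℝ)
    (A C Q : ℝ → Matrix (Fin n) (Fin n) ℝ)
    (B D : ℝ → Matrix (Fin n) (Fin l) ℝ)
    (R : ℝ → Matrix (Fin l) (Fin l) ℝ)
    (G₁ G₂ : Matrix (Fin n) (Fin n) ℝ)
    (Φ₁ Φ₂ Φ₆ Φ₁' Φ₂' Φ₆' : ℝ → Matrix (Fin n) (Fin n) ℝ)
    (hd₁ : ∀ t ∈ Set.Icc (0 : ℝ) T, HasDerivWithinAt Φ₁ (Φ₁' t) (Set.Icc (0 : ℝ) T) t)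
    (hd₂ : ∀ t ∈ Set.Icc (0 : ℝ) T, HasDerivWithinAt Φ₂ (Φ₂' t) (Set.Icc (0 : ℝ) T) t)
    (hd₆ : ∀ t ∈ Set.Icc (0 : ℝ) T, HasDerivWithinAt Φ₆ (Φ₆' t) (Set.Icc (0 : ℝ) T) t)
    (Ψ : ℝ → Matrix (Fin l) (Fin n) ℝ)
    (hΨ : ∀ t, Ψ t = -(((D t)ᵀ * Φ₁ t * D t + R t)⁻¹
      * ((D t)ᵀ * Φ₁ t * C t + (B t)ᵀ * Φ₁ t + (B t)ᵀ * (Φ₆ t)ᵀ * Φ₂ t * Φ₆ t)))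
    (heq₁ : ∀ t ∈ Set.Icc (0 : ℝ) T,
      Φ₁' t + Φ₁ t * (A t + B t * Ψ t) + (A t + B t * Ψ t)ᵀ * Φ₁ t
        + (C t + D t * Ψ t)ᵀ * Φ₁ t * (C t + D t * Ψ t)
        + Q t + (Ψ t)ᵀ * R t * Ψ t = 0)
    (heq₂ : ∀ t ∈ Set.Icc (0 : ℝ) T, Φ₂' t = 0)
    (heq₆ : ∀ t ∈ Set.Icc (0 : ℝ) T, Φ₆' t + Φ₆ t * (A t + B t * Ψ t) = 0)
    (hT₁ : Φ₁ T = G₁) (hT₂ : Φ₂ T = G₂) (hT₆ : Φ₆ T = 1) :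
    (Φ₁ T + (Φ₆ T)ᵀ * Φ₂ T * Φ₆ T = G₁ + G₂) ∧
    (∀ t ∈ Set.Icc (0 : ℝ) T,
      Ψ t = -(((D t)ᵀ * Φ₁ t * D t + R t)⁻¹
        * ((D t)ᵀ * Φ₁ t * C t
          + (B t)ᵀ * (Φ₁ t + (Φ₆ t)ᵀ * Φ₂ t * Φ₆ t)))) ∧
    (∀ t ∈ Set.Icc (0 : ℝ) T,
      Φ₁' t + Φ₁ t * (A t + B t * Ψ t) + (A t + B t * Ψ t)ᵀ * Φ₁ t
        + (C t + D t * Ψ t)ᵀ * Φ₁ t * (C t + D t * Ψ t)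
        + Q t + (Ψ t)ᵀ * R t * Ψ t = 0) ∧
    (∀ t ∈ Set.Icc (0 : ℝ) T,
      HasDerivWithinAt (fun τ => Φ₁ τ + (Φ₆ τ)ᵀ * Φ₂ τ * Φ₆ τ)
        (-((Φ₁ t + (Φ₆ t)ᵀ * Φ₂ t * Φ₆ t) * (A t + B t * Ψ t)
          + (A t + B t * Ψ t)ᵀ * (Φ₁ t + (Φ₆ t)ᵀ * Φ₂ t * Φ₆ t)
          + (C t + D t * Ψ t)ᵀ * Φ₁ t * (C t + D t * Ψ t)
          + Q t + (Ψ t)ᵀ * R t * Ψ t))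
        (Set.Icc (0 : ℝ) T) t) := by
  refine ⟨by simp [hT₁, hT₂, hT₆], fun t _ => ?_, heq₁, fun t ht => ?_⟩
  · rw [hΨ t, Matrix.mul_add (B t)ᵀ, ← add_assoc]
    simp only [Matrix.mul_assoc]
  · have hΦ₁' : Φ₁' t = -(Φ₁ t * (A t + B t * Ψ t) + (A t + B t * Ψ t)ᵀ * Φ₁ t
        + (C t + D t * Ψ t)ᵀ * Φ₁ t * (C t + D t * Ψ t) + Q t + (Ψ t)ᵀ * R t * Ψ t) := by
      rw [← sub_eq_zero, sub_neg_eq_add, ← heq₁ t ht]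
      abel
    have hP := (hd₆ t ht).transpose_mul_mul_of_eq_neg_mul ((heq₂ t ht) ▸ hd₂ t ht)
      (eq_neg_of_add_eq_zero_left (heq₆ t ht))
    refine ((hd₁ t ht).add hP).congr_deriv ?_
    rw [hΦ₁']
    noncomm_ring

/-- Section 4: under the substitution `Φ = Φ₁`, `Φ̂ = Φ₁ + Φ₆ᵀ Φ₂ Φ₆`, a solution
of the Riccati system (Ri-LQ1-S) yields a solution of the mean-field-type Riccati
system (Ri-LQ2-S), with `Ψ̄ = -(DᵀΦD + R)⁻¹ (DᵀΦC + BᵀΦ̂)` and `Φ̂(T) = G₁ + G₂`. -/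
theorem statement12 (n l : ℕ) (hn : 1 ≤ n) (hl : 1 ≤ l) (T : ℝ) (hT : 0 < T)
    (A C Q : ℝ → Matrix (Fin n) (Fin n) ℝ)
    (B D : ℝ → Matrix (Fin n) (Fin l) ℝ)
    (R : ℝ → Matrix (Fin l) (Fin l) ℝ)
    (G₁ G₂ : Matrix (Fin n) (Fin n) ℝ)
    (Φ₁ Φ₂ Φ₆ Φ₁' Φ₂' Φ₆' : ℝ → Matrix (Fin n) (Fin n) ℝ)
    (hd₁ : ∀ t ∈ Set.Icc (0 : ℝ) T, HasDerivWithinAt Φ₁ (Φ₁' t) (Set.Icc (0 : ℝ) T) t)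
    (hd₂ : ∀ t ∈ Set.Icc (0 : ℝ) T, HasDerivWithinAt Φ₂ (Φ₂' t) (Set.Icc (0 : ℝ) T) t)
    (hd₆ : ∀ t ∈ Set.Icc (0 : ℝ) T, HasDerivWithinAt Φ₆ (Φ₆' t) (Set.Icc (0 : ℝ) T) t)
    (hinv : ∀ t ∈ Set.Icc (0 : ℝ) T, IsUnit ((D t)ᵀ * Φ₁ t * D t + R t))
    (Ψ : ℝ → Matrix (Fin l) (Fin n) ℝ)
    (hΨ : ∀ t, Ψ t = -(((D t)ᵀ * Φ₁ t * D t + R t)⁻¹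
      * ((D t)ᵀ * Φ₁ t * C t + (B t)ᵀ * Φ₁ t + (B t)ᵀ * (Φ₆ t)ᵀ * Φ₂ t * Φ₆ t)))
    (heq₁ : ∀ t ∈ Set.Icc (0 : ℝ) T,
      Φ₁' t + Φ₁ t * (A t + B t * Ψ t) + (A t + B t * Ψ t)ᵀ * Φ₁ t
        + (C t + D t * Ψ t)ᵀ * Φ₁ t * (C t + D t * Ψ t)
        + Q t + (Ψ t)ᵀ * R t * Ψ t = 0)
    (heq₂ : ∀ t ∈ Set.Icc (0 : ℝ) T, Φ₂' t = 0)
    (heq₆ : ∀ t ∈ Set.Icc (0 : ℝ) T, Φ₆' t + Φ₆ t * (A t + B t * Ψ t) = 0)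
    (hT₁ : Φ₁ T = G₁) (hT₂ : Φ₂ T = G₂) (hT₆ : Φ₆ T = 1) :
    (Φ₁ T + (Φ₆ T)ᵀ * Φ₂ T * Φ₆ T = G₁ + G₂) ∧
    (∀ t ∈ Set.Icc (0 : ℝ) T,
      Ψ t = -(((D t)ᵀ * Φ₁ t * D t + R t)⁻¹
        * ((D t)ᵀ * Φ₁ t * C t
          + (B t)ᵀ * (Φ₁ t + (Φ₆ t)ᵀ * Φ₂ t * Φ₆ t)))) ∧
    (∀ t ∈ Set.Icc (0 : ℝ) T,
      Φ₁' t + Φ₁ t * (A t + B t * Ψ t) + (A t + B t * Ψ t)ᵀ * Φ₁ t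
        + (C t + D t * Ψ t)ᵀ * Φ₁ t * (C t + D t * Ψ t)
        + Q t + (Ψ t)ᵀ * R t * Ψ t = 0) ∧
    (∀ t ∈ Set.Icc (0 : ℝ) T,
      HasDerivWithinAt (fun τ => Φ₁ τ + (Φ₆ τ)ᵀ * Φ₂ τ * Φ₆ τ)
        (-((Φ₁ t + (Φ₆ t)ᵀ * Φ₂ t * Φ₆ t) * (A t + B t * Ψ t)
          + (A t + B t * Ψ t)ᵀ * (Φ₁ t + (Φ₆ t)ᵀ * Φ₂ t * Φ₆ t)
          + (C t + D t * Ψ t)ᵀ * Φ₁ t * (C t + D t * Ψ t)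
          + Q t + (Ψ t)ᵀ * R t * Ψ t))
        (Set.Icc (0 : ℝ) T) t) :=
  statement12_general n l T A C Q B D R G₁ G₂ Φ₁ Φ₂ Φ₆ Φ₁' Φ₂' Φ₆' hd₁ hd₂ hd₆ Ψ hΨ heq₁ heq₂ heq₆
    hT₁ hT₂ hT₆
end

section
/- Let T > 0, r, μ ∈ ℝ, σ ≠ 0 and γ > 0. Suppose Φ₁, …, Φ₇ : [0,T] → ℝ are continuously differentiable with Φ₁(t) ≠ 0 for all t, and, with Ψ̄(t) := −(σ²Φ₁(t))⁻¹·(μ−r)·(Φ₁(t) + Φ₂(t)Φ₆(t)² + (1/2)Φ₃(t)Φ₆(t)) and v̄(t) := −(σ²Φ₁(t))⁻¹·(μ−r)·(Φ₄(t) + Φ₆(t)Φ₂(t)Φ₇(t)), the following ODE system holds on [0,T]: Φ̇₁ + 2Φ₁(r + (μ−r)Ψ̄) + σ²Ψ̄²Φ₁ = 0; Φ̇₂ = 0; Φ̇₃ = 0; Φ̇₄ + v̄(μ−r)Φ₁ + Φ₄(r + (μ−r)Ψ̄) + σ²v̄Φ₁Ψ̄ = 0; Φ̇₅ + Φ₄(μ−r)v̄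 + (1/2)σ²v̄²Φ₁ = 0; Φ̇₆ + Φ₆(r + (μ−r)Ψ̄) = 0; Φ̇₇ + Φ₆(μ−r)v̄ = 0; with terminal conditions Φ₁(T) = γ, Φ₂(T) = −γ, Φ₃(T) = 0, Φ₄(T) = −1, Φ₅(T) = 0, Φ₆(T) = 1, Φ₇(T) = 0. Then for every t ∈ [0,T]: Φ₂(t) = −γ, Φ₃(t) = 0, Φ₁(t) = γ·Φ₆(t)², and consequently Ψ̄(t) = 0. -/
/-! `Φ₂` and `Φ₃` have zero derivative, so they keep their terminal values `-γ` and `0`.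
Substituting these into `Ψ̄` gives `Ψ̄ = -(σ²Φ₁)⁻¹ (μ - r) W` with `W := Φ₁ - γ Φ₆²`, and the
equations for `Φ₁` and `Φ₆` combine into the linear equation `Ẇ = (-2r - (μ - r) Ψ̄) W`, whose
coefficient is continuous. As `W(T) = γ - γ = 0`, uniqueness for linear ODEs gives `W ≡ 0`, that is
`Φ₁ = γ Φ₆²` and `Ψ̄ = 0`. -/

open Set

section

variable {E : Type*} [NormedAddCommGroup E] [NormedSpace ℝ E] {f : ℝ → E} {a b : ℝ}

theorem eq_right_of_hasDerivWithinAt_zero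
    (hf : ∀ t ∈ Icc a b, HasDerivWithinAt f 0 (Icc a b) t) : ∀ t ∈ Icc a b, f t = f b := by
  have hconst := constant_of_has_deriv_right_zero (fun t ht => (hf t ht).continuousWithinAt)
    fun t ht => (hf t (Ico_subset_Icc_self ht)).mono_of_mem_nhdsWithin (Icc_mem_nhdsGE_of_mem ht)
  intro t ht
  rw [hconst t ht, hconst b (right_mem_Icc.2 (ht.1.trans ht.2))]

theorem eqOn_zero_of_hasDerivWithinAt_smul {c : ℝ → ℝ} (hc : ContinuousOn c (Icc a b))
    (hf : ∀ t ∈ Icc a b, HasDerivWithinAt f (c t • f t) (Icc a b) t) (hb : f b = 0) :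
    EqOn f 0 (Icc a b) := by
  obtain ⟨K, hK⟩ := isCompact_Icc.exists_bound_of_continuousOn hc
  have hlip : ∀ t ∈ Ioc a b, LipschitzOnWith K.toNNReal (fun x : E => c t • x) univ := by
    intro t ht
    refine ((lipschitzWith_smul (c t)).weaken ?_).lipschitzOnWith
    rw [← NNReal.coe_le_coe, coe_nnnorm, Real.coe_toNNReal']
    exact (hK t (Ioc_subset_Icc_self ht)).trans (le_max_left _ _)
  exact ODE_solution_unique_of_mem_Icc_left hlip (fun t ht => (hf t ht).continuousWithinAt)
    (fun t ht => (hf t (Ioc_subset_Icc_self ht)).mono_of_mem_nhdsWithin (Icc_mem_nhdsLE_of_mem ht))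
    (fun _ _ => mem_univ _) continuousOn_const
    (fun t _ => by simpa using hasDerivWithinAt_zero (F := E) t (Iic t)) (fun _ _ => mem_univ _) hb

end

theorem mul_inv_mul_sq {K : Type*} [Field K] (a m : K) : a * (a⁻¹ * m) ^ 2 = a⁻¹ * m ^ 2 := by
  rcases eq_or_ne a 0 with rfl | ha
  · simp
  · field_simp

theorem statement13_general (T r μ σ γ : ℝ)
    (Φ₁ Φ₂ Φ₃ Φ₆ Φ₁' Φ₂' Φ₃' Φ₆' Ψ : ℝ → ℝ)
    (hne : ∀ t, Φ₁ t ≠ 0)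
    (hd₁ : ∀ t ∈ Set.Icc (0 : ℝ) T, HasDerivWithinAt Φ₁ (Φ₁' t) (Set.Icc (0 : ℝ) T) t)
    (hd₂ : ∀ t ∈ Set.Icc (0 : ℝ) T, HasDerivWithinAt Φ₂ (Φ₂' t) (Set.Icc (0 : ℝ) T) t)
    (hd₃ : ∀ t ∈ Set.Icc (0 : ℝ) T, HasDerivWithinAt Φ₃ (Φ₃' t) (Set.Icc (0 : ℝ) T) t)
    (hd₆ : ∀ t ∈ Set.Icc (0 : ℝ) T, HasDerivWithinAt Φ₆ (Φ₆' t) (Set.Icc (0 : ℝ) T) t)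
    (hΨ : ∀ t, Ψ t = -(σ ^ 2 * Φ₁ t)⁻¹ * (μ - r)
      * (Φ₁ t + Φ₂ t * Φ₆ t ^ 2 + (1 / 2) * Φ₃ t * Φ₆ t))
    (he₁ : ∀ t ∈ Set.Icc (0 : ℝ) T,
      Φ₁' t + 2 * Φ₁ t * (r + (μ - r) * Ψ t) + σ ^ 2 * Ψ t ^ 2 * Φ₁ t = 0)
    (he₂ : ∀ t ∈ Set.Icc (0 : ℝ) T, Φ₂' t = 0)
    (he₃ : ∀ t ∈ Set.Icc (0 : ℝ) T, Φ₃' t = 0)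
    (he₆ : ∀ t ∈ Set.Icc (0 : ℝ) T, Φ₆' t + Φ₆ t * (r + (μ - r) * Ψ t) = 0)
    (hT₁ : Φ₁ T = γ) (hT₂ : Φ₂ T = -γ) (hT₃ : Φ₃ T = 0) (hT₆ : Φ₆ T = 1) :
    ∀ t ∈ Set.Icc (0 : ℝ) T,
      Φ₂ t = -γ ∧ Φ₃ t = 0 ∧ Φ₁ t = γ * Φ₆ t ^ 2 ∧ Ψ t = 0 := by
  have hΦ₂ := eq_right_of_hasDerivWithinAt_zero fun t ht => he₂ t ht ▸ hd₂ t ht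
  have hΦ₃ := eq_right_of_hasDerivWithinAt_zero fun t ht => he₃ t ht ▸ hd₃ t ht
  set W : ℝ → ℝ := fun t => Φ₁ t - γ * Φ₆ t ^ 2
  have hΨW : ∀ t ∈ Icc 0 T, Ψ t = -((σ ^ 2 * Φ₁ t)⁻¹ * ((μ - r) * W t)) := by
    intro t ht
    rw [hΨ, hΦ₂ t ht, hΦ₃ t ht, hT₂, hT₃]
    ring
  have hW' : ∀ t ∈ Icc 0 T,
      HasDerivWithinAt W ((-(2 * r) - (μ - r) * Ψ t) * W t) (Icc 0 T) t := by
    intro t ht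
    refine ((hd₁ t ht).sub (((hd₆ t ht).pow 2).const_mul γ)).congr_deriv ?_
    have hsq : σ ^ 2 * Φ₁ t * Ψ t ^ 2 = -(μ - r) * W t * Ψ t := by
      rw [hΨW t ht, neg_sq, mul_inv_mul_sq]
      ring
    linear_combination he₁ t ht - 2 * γ * Φ₆ t * he₆ t ht - hsq
  have hΨc : ContinuousOn Ψ (Icc 0 T) := by
    have hΦ₁c : ContinuousOn Φ₁ (Icc 0 T) := fun t ht => (hd₁ t ht).continuousWithinAt
    have hWc : ContinuousOn W (Icc 0 T) := fun t ht => (hW' t ht).continuousWithinAt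
    refine ContinuousOn.congr ?_ hΨW
    simp_rw [mul_inv]
    exact ((continuousOn_const.mul (hΦ₁c.inv₀ fun t _ => hne t)).mul
      (continuousOn_const.mul hWc)).neg
  have hW0 : EqOn W 0 (Icc 0 T) :=
    eqOn_zero_of_hasDerivWithinAt_smul (continuousOn_const.sub (continuousOn_const.mul hΨc)) hW'
      (by simp [W, hT₁, hT₆])
  intro t ht
  refine ⟨(hΦ₂ t ht).trans hT₂, (hΦ₃ t ht).trans hT₃, ?_, ?_⟩
  · exact sub_eq_zero.mp (hW0 ht)
  · rw [hΨW t ht, hW0 ht]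
    simp

/-- Section 5.1 (mean-variance model): for the Riccati-type ODE system of the
mean-variance problem one has `Φ₂ ≡ -γ`, `Φ₃ ≡ 0`, `Φ₁ ≡ γ Φ₆²`, and hence the
linear part `Ψ̄` of the equilibrium strategy vanishes. -/
theorem statement13 (T r μ σ γ : ℝ) (hT : 0 < T) (hσ : σ ≠ 0) (hγ : 0 < γ)
    (Φ₁ Φ₂ Φ₃ Φ₄ Φ₅ Φ₆ Φ₇ Φ₁' Φ₂' Φ₃' Φ₄' Φ₅' Φ₆' Φ₇' Ψ v : ℝ → ℝ)
    (hne : ∀ t, Φ₁ t ≠ 0)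
    (hc₁ : ContinuousOn Φ₁' (Set.Icc 0 T)) (hc₂ : ContinuousOn Φ₂' (Set.Icc 0 T))
    (hc₃ : ContinuousOn Φ₃' (Set.Icc 0 T)) (hc₄ : ContinuousOn Φ₄' (Set.Icc 0 T))
    (hc₅ : ContinuousOn Φ₅' (Set.Icc 0 T)) (hc₆ : ContinuousOn Φ₆' (Set.Icc 0 T))
    (hc₇ : ContinuousOn Φ₇' (Set.Icc 0 T))
    (hd₁ : ∀ t ∈ Set.Icc (0 : ℝ) T, HasDerivWithinAt Φ₁ (Φ₁' t) (Set.Icc (0 : ℝ) T) t)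
    (hd₂ : ∀ t ∈ Set.Icc (0 : ℝ) T, HasDerivWithinAt Φ₂ (Φ₂' t) (Set.Icc (0 : ℝ) T) t)
    (hd₃ : ∀ t ∈ Set.Icc (0 : ℝ) T, HasDerivWithinAt Φ₃ (Φ₃' t) (Set.Icc (0 : ℝ) T) t)
    (hd₄ : ∀ t ∈ Set.Icc (0 : ℝ) T, HasDerivWithinAt Φ₄ (Φ₄' t) (Set.Icc (0 : ℝ) T) t)
    (hd₅ : ∀ t ∈ Set.Icc (0 : ℝ) T, HasDerivWithinAt Φ₅ (Φ₅' t) (Set.Icc (0 : ℝ) T) t)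
    (hd₆ : ∀ t ∈ Set.Icc (0 : ℝ) T, HasDerivWithinAt Φ₆ (Φ₆' t) (Set.Icc (0 : ℝ) T) t)
    (hd₇ : ∀ t ∈ Set.Icc (0 : ℝ) T, HasDerivWithinAt Φ₇ (Φ₇' t) (Set.Icc (0 : ℝ) T) t)
    (hΨ : ∀ t, Ψ t = -(σ ^ 2 * Φ₁ t)⁻¹ * (μ - r)
      * (Φ₁ t + Φ₂ t * Φ₆ t ^ 2 + (1 / 2) * Φ₃ t * Φ₆ t))
    (hv : ∀ t, v t = -(σ ^ 2 * Φ₁ t)⁻¹ * (μ - r) * (Φ₄ t + Φ₆ t * Φ₂ t * Φ₇ t))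
    (he₁ : ∀ t ∈ Set.Icc (0 : ℝ) T,
      Φ₁' t + 2 * Φ₁ t * (r + (μ - r) * Ψ t) + σ ^ 2 * Ψ t ^ 2 * Φ₁ t = 0)
    (he₂ : ∀ t ∈ Set.Icc (0 : ℝ) T, Φ₂' t = 0)
    (he₃ : ∀ t ∈ Set.Icc (0 : ℝ) T, Φ₃' t = 0)
    (he₄ : ∀ t ∈ Set.Icc (0 : ℝ) T,
      Φ₄' t + v t * (μ - r) * Φ₁ t + Φ₄ t * (r + (μ - r) * Ψ t)
        + σ ^ 2 * v t * Φ₁ t * Ψ t = 0)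
    (he₅ : ∀ t ∈ Set.Icc (0 : ℝ) T,
      Φ₅' t + Φ₄ t * (μ - r) * v t + (1 / 2) * σ ^ 2 * v t ^ 2 * Φ₁ t = 0)
    (he₆ : ∀ t ∈ Set.Icc (0 : ℝ) T, Φ₆' t + Φ₆ t * (r + (μ - r) * Ψ t) = 0)
    (he₇ : ∀ t ∈ Set.Icc (0 : ℝ) T, Φ₇' t + Φ₆ t * (μ - r) * v t = 0)
    (hT₁ : Φ₁ T = γ) (hT₂ : Φ₂ T = -γ) (hT₃ : Φ₃ T = 0) (hT₄ : Φ₄ T = -1)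
    (hT₅ : Φ₅ T = 0) (hT₆ : Φ₆ T = 1) (hT₇ : Φ₇ T = 0) :
    ∀ t ∈ Set.Icc (0 : ℝ) T,
      Φ₂ t = -γ ∧ Φ₃ t = 0 ∧ Φ₁ t = γ * Φ₆ t ^ 2 ∧ Ψ t = 0 :=
  statement13_general T r μ σ γ Φ₁ Φ₂ Φ₃ Φ₆ Φ₁' Φ₂' Φ₃' Φ₆' Ψ hne hd₁ hd₂ hd₃ hd₆ hΨ he₁ he₂ he₃ he₆
    hT₁ hT₂ hT₃ hT₆
end
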